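/- arXiv:2405.08275 — 6 statements merged into one kernel-verified Lean document; each statement's English description precedes it below -/
import Mathlib

section
/- Let n be a positive integer, p a positive integer, λ > 0, and let z ∈ ℝ^n be nonzero. Let x* be the unique minimizer of x ↦ (1/2)‖x − z‖² + λ‖x‖₁^p over ℝ^n. Then for every index i: if z_i > 0 then x*_i ≥ 0, and if z_i < 0 then x*_i ≤ 0. -/
lemma prox_l1p_sign_aux (n : ℕ) (p : ℕ)
    (lam : ℝ) (hlam : 0 < lam) (z : Fin n → ℝ)
    (xs : Fin n → ℝ)
    (hmin : ∀ x : Fin n → ℝ,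
      (1/2) * ∑ i, (xs i - z i)^2 + lam * (∑ i, |xs i|)^p ≤
      (1/2) * ∑ i, (x i - z i)^2 + lam * (∑ i, |x i|)^p)
    (i : Fin n) (h : xs i * z i < 0) : False := by
  set y := Function.update xs i (-(xs i)) with hy
  have hsplit : ∀ f : Fin n → ℝ, ∑ j, f j = f i + ∑ j ∈ Finset.univ.erase i, f j :=
    fun f => (Finset.add_sum_erase _ f (Finset.mem_univ i)).symm
  have hyi : y i = -(xs i) := Function.update_self i _ xs
  have hyj : ∀ j ∈ Finset.univ.erase i, y j = xs j := by
    intro j hj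
    exact Function.update_of_ne (Finset.ne_of_mem_erase hj) _ xs
  have hsum1 : ∑ j, (y j - z j)^2 < ∑ j, (xs j - z j)^2 := by
    rw [hsplit (fun j => (y j - z j)^2), hsplit (fun j => (xs j - z j)^2)]
    have : ∑ j ∈ Finset.univ.erase i, (y j - z j)^2
        = ∑ j ∈ Finset.univ.erase i, (xs j - z j)^2 :=
      Finset.sum_congr rfl (fun j hj => by rw [hyj j hj])
    rw [this, hyi]
    nlinarith [h]
  have hsum2 : ∑ j, |y j| = ∑ j, |xs j| := by
    rw [hsplit (fun j => |y j|), hsplit (fun j => |xs j|)]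
    have : ∑ j ∈ Finset.univ.erase i, |y j|
        = ∑ j ∈ Finset.univ.erase i, |xs j| :=
      Finset.sum_congr rfl (fun j hj => by rw [hyj j hj])
    rw [this, hyi, abs_neg]
  have := hmin y
  rw [hsum2] at this
  linarith

/-- Sign property of the proximal operator of λ‖·‖₁^p: the minimizer has entries
with signs compatible with those of z. -/
theorem prox_l1p_sign (n : ℕ) (hn : 0 < n) (p : ℕ) (hp : 0 < p)
    (lam : ℝ) (hlam : 0 < lam) (z : Fin n → ℝ) (hz : z ≠ 0)
    (xs : Fin n → ℝ)
    (hmin : ∀ x : Fin n → ℝ,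
      (1/2) * ∑ i, (xs i - z i)^2 + lam * (∑ i, |xs i|)^p ≤
      (1/2) * ∑ i, (x i - z i)^2 + lam * (∑ i, |x i|)^p) :
    ∀ i, (0 < z i → 0 ≤ xs i) ∧ (z i < 0 → xs i ≤ 0) := by
  intro i
  constructor <;> intro hzi <;> by_contra hneg <;> push_neg at hneg <;>
    exact prox_l1p_sign_aux n p lam hlam z xs hmin i (by nlinarith)
end

section
/- Let n be a positive integer, p a positive integer, λ > 0, and let z ∈ ℝ^n be nonzero. Let x* be the unique minimizer of x ↦ (1/2)‖x − z‖² + λ‖x‖₁^p over ℝ^n. Then for all indices i, j: if |z_i| > |z_j| then |x*_i| ≥ |x*_j|. -/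
set_option maxHeartbeats 1000000


/-- Order property of the proximal operator of λ‖·‖₁^p: entries of the minimizer
preserve the order of the absolute values of the entries of z. -/
theorem prox_l1p_order (n : ℕ) (hn : 0 < n) (p : ℕ) (hp : 0 < p)
    (lam : ℝ) (hlam : 0 < lam) (z : Fin n → ℝ) (hz : z ≠ 0)
    (xs : Fin n → ℝ)
    (hmin : ∀ x : Fin n → ℝ,
      (1/2) * ∑ i, (xs i - z i)^2 + lam * (∑ i, |xs i|)^p ≤
      (1/2) * ∑ i, (x i - z i)^2 + lam * (∑ i, |x i|)^p) :
    ∀ i j, |z j| < |z i| → |xs j| ≤ |xs i| := by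
  intro i j hzij
  by_contra hcon
  push_neg at hcon
  have hij : i ≠ j := by
    intro h; rw [h] at hzij; exact lt_irrefl _ hzij
  set si : ℝ := if 0 ≤ z i then 1 else -1 with hsi
  set sj : ℝ := if 0 ≤ z j then 1 else -1 with hsj
  set x : Fin n → ℝ := fun k => if k = i then si * |xs j| else if k = j then sj * |xs i| else xs k with hx
  have hxi : x i = si * |xs j| := by simp [hx]
  have hxj : x j = sj * |xs i| := by simp [hx, hij.symm]
  have hxk : ∀ k, k ≠ i → k ≠ j → x k = xs k := by
    intro k h1 h2; simp [hx, h1, h2]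
  clear_value x
  have hsiz : si * z i = |z i| := by
    rw [hsi]; split_ifs with h
    · rw [abs_of_nonneg h]; ring
    · rw [abs_of_neg (lt_of_not_ge h)]; ring
  have hsjz : sj * z j = |z j| := by
    rw [hsj]; split_ifs with h
    · rw [abs_of_nonneg h]; ring
    · rw [abs_of_neg (lt_of_not_ge h)]; ring
  have hsi2 : si * si = 1 := by rw [hsi]; split_ifs <;> norm_num
  have hsj2 : sj * sj = 1 := by rw [hsj]; split_ifs <;> norm_num
  have habs_si : |si| = 1 := by rw [hsi]; split_ifs <;> norm_num
  have habs_sj : |sj| = 1 := by rw [hsj]; split_ifs <;> norm_num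
  clear_value si sj
  have hsplit : ∀ (F : Fin n → ℝ → ℝ) (y : Fin n → ℝ),
      ∑ k, F k (y k) = F i (y i) + F j (y j)
        + ∑ k ∈ (Finset.univ.erase i).erase j, F k (y k) := by
    intro F y
    rw [← Finset.add_sum_erase _ (fun k => F k (y k)) (Finset.mem_univ i),
        ← Finset.add_sum_erase _ (fun k => F k (y k))
          (Finset.mem_erase.mpr ⟨hij.symm, Finset.mem_univ j⟩)]
    ring
  have htail : ∀ (F : Fin n → ℝ → ℝ),
      ∑ k ∈ (Finset.univ.erase i).erase j, F k (x k)
        = ∑ k ∈ (Finset.univ.erase i).erase j, F k (xs k) := by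
    intro F
    apply Finset.sum_congr rfl
    intro k hk
    have h2 := Finset.mem_erase.mp hk
    have h1 := Finset.mem_erase.mp h2.2
    rw [hxk k h1.1 h2.1]
  have habs_xi : |x i| = |xs j| := by
    rw [hxi, abs_mul, habs_si, one_mul, abs_abs]
  have habs_xj : |x j| = |xs i| := by
    rw [hxj, abs_mul, habs_sj, one_mul, abs_abs]
  have hl1 : ∑ k, |x k| = ∑ k, |xs k| := by
    rw [hsplit (fun _ v => |v|) x, hsplit (fun _ v => |v|) xs,
        htail (fun _ v => |v|)]
    rw [habs_xi, habs_xj]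
    ring
  have hq : ∑ k, (x k - z k)^2 < ∑ k, (xs k - z k)^2 := by
    rw [hsplit (fun k v => (v - z k)^2) x, hsplit (fun k v => (v - z k)^2) xs,
        htail (fun k v => (v - z k)^2)]
    have h1 : (x i - z i)^2 + (x j - z j)^2 < (xs i - z i)^2 + (xs j - z j)^2 := by
      rw [hxi, hxj]
      have e1 : xs i * z i ≤ |xs i| * |z i| :=
        (le_abs_self _).trans_eq (abs_mul _ _)
      have e2 : xs j * z j ≤ |xs j| * |z j| :=
        (le_abs_self _).trans_eq (abs_mul _ _)
      have e3 : (0:ℝ) < (|z i| - |z j|) * (|xs j| - |xs i|) :=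
        mul_pos (by linarith) (by linarith)
      have q1 : (si * |xs j| - z i)^2 = xs j ^2 - 2*(|xs j| * |z i|) + z i^2 := by
        calc (si * |xs j| - z i)^2
            = (si*si) * (|xs j|^2) - 2*(|xs j| * (si*z i)) + z i^2 := by ring
          _ = xs j ^2 - 2*(|xs j| * |z i|) + z i^2 := by
              rw [hsi2, hsiz, sq_abs]; ring
      have q2 : (sj * |xs i| - z j)^2 = xs i ^2 - 2*(|xs i| * |z j|) + z j^2 := by
        calc (sj * |xs i| - z j)^2
            = (sj*sj) * (|xs i|^2) - 2*(|xs i| * (sj*z j)) + z j^2 := by ring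
          _ = xs i ^2 - 2*(|xs i| * |z j|) + z j^2 := by
              rw [hsj2, hsjz, sq_abs]; ring
      have r1 : (xs i - z i)^2 = xs i^2 - 2*(xs i*z i) + z i^2 := by ring
      have r2 : (xs j - z j)^2 = xs j^2 - 2*(xs j*z j) + z j^2 := by ring
      have e3' : |z i| * |xs i| + |z j| * |xs j| < |z i| * |xs j| + |z j| * |xs i| := by
        nlinarith [e3]
      rw [q1, q2, r1, r2]
      linarith [e1, e2, e3']
    linarith
  have hobj : (1/2) * ∑ k, (x k - z k)^2 + lam * (∑ k, |x k|)^p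
      < (1/2) * ∑ k, (xs k - z k)^2 + lam * (∑ k, |xs k|)^p := by
    rw [hl1]
    linarith
  linarith [hmin x]
end

section
/- Let E and F be finite-dimensional real inner product spaces, T : E → F a linear map, and κ > 0 with ‖T v‖ ≤ κ‖v‖ for all v ∈ E. Let α > 0 and let f : E → ℝ be α-strongly convex (i.e., x ↦ f(x) − (α/2)‖x‖² is convex). Let b ∈ F, s > 0, let x̄ ∈ E with a subgradient z̄ of f at x̄, set z = z̄ + s·T*(b − T x̄) (T* the adjoint of T), and let x ∈ E be a point at which z is a subgradient of f. Then for every h ∈ E with T h = b, D_{f,z}(x, h) ≤ D_{f,z̄}(x̄, h) − s·(1 − s·κ²/(2α))·‖b − T x̄‖², where D_{f,u}(x, y) = f(y) − f(x) − ⟨u, y − x⟩. -/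
open scoped RealInnerProductSpace

/-- Strong subgradient inequality for an α-strongly convex function. -/
theorem strong_subgrad {E : Type*}
    [NormedAddCommGroup E] [InnerProductSpace ℝ E]
    (α : ℝ) (hα : 0 < α) (f : E → ℝ)
    (hconv : ConvexOn ℝ Set.univ (fun x => f x - (α/2) * ‖x‖^2))
    (xbar zbar : E) (hzbar : ∀ w : E, f xbar + ⟪zbar, w - xbar⟫ ≤ f w)
    (w : E) : f xbar + ⟪zbar, w - xbar⟫ + (α/2) * ‖w - xbar‖^2 ≤ f w := by
  have key : ∀ t : ℝ, 0 < t → t ≤ 1 →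
      ⟪zbar, w - xbar⟫ + (α/2) * (1-t) * ‖w - xbar‖^2 ≤ f w - f xbar := by
    intro t ht ht1
    have hg := hconv.2 (Set.mem_univ xbar) (Set.mem_univ w)
      (by linarith : (0:ℝ) ≤ 1 - t) ht.le (by ring)
    have hpt : (1-t) • xbar + t • w = xbar + t • (w - xbar) := by
      rw [smul_sub, sub_smul, one_smul]; abel
    have hsub := hzbar (xbar + t • (w - xbar))
    have hin : ⟪zbar, xbar + t • (w - xbar) - xbar⟫ = t * ⟪zbar, w - xbar⟫ := by
      rw [add_sub_cancel_left, real_inner_smul_right]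
    have hnorm : ‖(1-t) • xbar + t • w‖^2 + t*(1-t)*‖w - xbar‖^2
        = (1-t) * ‖xbar‖^2 + t * ‖w‖^2 := by
      simp only [← real_inner_self_eq_norm_sq, real_inner_add_add_self,
        real_inner_sub_sub_self, real_inner_smul_left, real_inner_smul_right]
      rw [real_inner_comm w xbar]
      ring
    rw [hpt] at hg hnorm
    rw [hin] at hsub
    simp only [smul_eq_mul] at hg
    have hmul : t * (⟪zbar, w - xbar⟫ + (α/2) * (1-t) * ‖w - xbar‖^2)
        ≤ t * (f w - f xbar) := by nlinarith [hg, hsub, hnorm]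
    exact le_of_mul_le_mul_left hmul ht
  rw [← sub_nonneg]
  by_contra hcon
  push_neg at hcon
  set ε : ℝ := -(f w - (f xbar + ⟪zbar, w - xbar⟫ + (α/2) * ‖w - xbar‖^2)) with hε
  have hεpos : 0 < ε := by simp only [hε]; linarith
  set C : ℝ := (α/2) * ‖w - xbar‖^2 with hC
  have hCnn : 0 ≤ C := by positivity
  set t : ℝ := min 1 (ε / (C + 1)) with htdef
  have ht0 : 0 < t := lt_min one_pos (by positivity)
  have ht1 : t ≤ 1 := min_le_left _ _
  have hkey := key t ht0 ht1
  have htC : t * C ≤ ε / (C + 1) * C :=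
    mul_le_mul_of_nonneg_right (min_le_right _ _) hCnn
  have hlt : ε / (C + 1) * C < ε := by
    rw [div_mul_eq_mul_div, div_lt_iff₀ (by linarith : 0 < C + 1)]
    nlinarith
  have heq : (α/2) * (1-t) * ‖w - xbar‖^2 = C - t * C := by rw [hC]; ring
  rw [heq] at hkey
  clear_value ε C t
  linarith

/-- One-step regularized Kaczmarz estimate: if f is α-strongly convex, z̄ is a
subgradient of f at x̄, z = z̄ + s·T*(b − T x̄), and z is a subgradient of f at x,
then for every h with T h = b,
D_{f,z}(x,h) ≤ D_{f,z̄}(x̄,h) − s(1 − sκ²/(2α))‖b − T x̄‖². -/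
theorem kaczmarz_one_step_estimate {E F : Type*}
    [NormedAddCommGroup E] [InnerProductSpace ℝ E] [FiniteDimensional ℝ E]
    [NormedAddCommGroup F] [InnerProductSpace ℝ F] [FiniteDimensional ℝ F]
    (T : E →ₗ[ℝ] F) (κ : ℝ) (hκ : 0 < κ) (hT : ∀ v : E, ‖T v‖ ≤ κ * ‖v‖)
    (α : ℝ) (hα : 0 < α) (f : E → ℝ)
    (hconv : ConvexOn ℝ Set.univ (fun x => f x - (α/2) * ‖x‖^2))
    (b : F) (s : ℝ) (hs : 0 < s)
    (xbar zbar : E) (hzbar : ∀ w : E, f xbar + ⟪zbar, w - xbar⟫ ≤ f w)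
    (z : E) (hz : z = zbar + s • (LinearMap.adjoint T) (b - T xbar))
    (x : E) (hx : ∀ w : E, f x + ⟪z, w - x⟫ ≤ f w) :
    ∀ h : E, T h = b →
      f h - f x - ⟪z, h - x⟫ ≤
        (f h - f xbar - ⟪zbar, h - xbar⟫)
          - s * (1 - s * κ^2 / (2 * α)) * ‖b - T xbar‖^2 := by
  intro h hTh
  have hzin : ⟪z, h - x⟫ = ⟪zbar, h - x⟫ + s * ⟪b - T xbar, b - T x⟫ := by
    rw [hz, inner_add_left, real_inner_smul_left, LinearMap.adjoint_inner_left,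
      map_sub, hTh]
  have hsplit : ⟪b - T xbar, b - T x⟫
      = ‖b - T xbar‖^2 - ⟪b - T xbar, T (x - xbar)⟫ := by
    have he : b - T x = (b - T xbar) - T (x - xbar) := by rw [map_sub]; abel
    rw [he, inner_sub_right, real_inner_self_eq_norm_sq]
  have hQ : ⟪zbar, h - xbar⟫ = ⟪zbar, h - x⟫ + ⟪zbar, x - xbar⟫ := by
    rw [← inner_add_right]; congr 1; abel
  have hstrong := strong_subgrad α hα f hconv xbar zbar hzbar x
  have hCS : ⟪b - T xbar, T (x - xbar)⟫ ≤ ‖b - T xbar‖ * (κ * ‖x - xbar‖) := by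
    refine (real_inner_le_norm _ _).trans ?_
    exact mul_le_mul_of_nonneg_left (hT _) (norm_nonneg _)
  set A : ℝ := ‖x - xbar‖ with hA
  set B : ℝ := ‖b - T xbar‖ with hB
  have hAnn : 0 ≤ A := norm_nonneg _
  have hBnn : 0 ≤ B := norm_nonneg _
  have h2α : (0:ℝ) < 2 * α := by linarith
  have hyoung : s * (B * (κ * A)) ≤ (α/2) * A^2 + s^2 * κ^2 * B^2 / (2*α) := by
    rw [← sub_nonneg]
    have hrw : (α/2) * A^2 + s^2 * κ^2 * B^2 / (2*α) - s * (B * (κ * A))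
        = (α * A - s * κ * B)^2 / (2*α) := by field_simp; ring
    rw [hrw]; positivity
  have hsG : s * ⟪b - T xbar, T (x - xbar)⟫ ≤ s * (B * (κ * A)) :=
    mul_le_mul_of_nonneg_left hCS hs.le
  rw [hzin, hsplit, hQ]
  have hgoal : s * (1 - s * κ^2 / (2*α)) * B^2
      = s * B^2 - s^2 * κ^2 * B^2 / (2*α) := by field_simp
  nlinarith [hstrong, hsG, hyoung]
end

section
/- Let m, n be positive integers, A ∈ ℝ^{m×n} with rows a₁,…,a_m all nonzero, b ∈ ℝ^m, p a positive integer, λ > 0, and 0 < t < 2. Define f(x) = λ‖x‖₁^p + (1/2)‖x‖² and let prox(z) denote the unique minimizer of x ↦ (1/2)‖x − z‖² + λ‖x‖₁^p. Given any index sequence i(k) ∈ {1,…,m} and z⁰ ∈ ℝ^n, define x⁰ = prox(z⁰) and, for k ≥ 0, z^{k+1} = z^k + (t/‖a_{i(k)}‖²)·(b_{i(k)} − ⟨a_{i(k)}, x^k⟩)·a_{i(k)} and x^{k+1} = prox(z^{k+1}). Then for every x ∈ ℝ^n with A x = b and every k ≥ 0, f(x^{k}) − f(x^{k+1}) ≤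 ⟨z^{k+1}, x − x^{k+1}⟩ − ⟨z^{k}, x − x^{k}⟩ − t·(1 − t/2)·⟨a_{i(k)}, x^k − x⟩² / ‖a_{i(k)}‖². -/
/-- Elementary limit argument: if `(1/2)(1-θ)D ≤ c` for all `θ ∈ (0,1)`, then `(1/2)D ≤ c`. -/
lemma half_le_of_forall_theta (D c : ℝ) (hD : 0 ≤ D)
    (key : ∀ θ : ℝ, 0 < θ → θ < 1 → (1/2) * (1 - θ) * D ≤ c) : (1/2) * D ≤ c := by
  have hc : 0 ≤ c := by have := key (1/2) (by norm_num) (by norm_num); linarith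
  by_contra hcon
  push_neg at hcon
  have hDpos : 0 < D := by linarith
  have hθ0 : 0 < (D/2 - c)/D := div_pos (by linarith) hDpos
  have hθ1 : (D/2 - c)/D < 1 := (div_lt_one hDpos).mpr (by linarith)
  have h3 := key _ hθ0 hθ1
  have h4 : (D/2 - c)/D * D = D/2 - c := div_mul_cancel₀ _ (ne_of_gt hDpos)
  nlinarith [h3, h4]

/-- Strong minimality of the prox: since the objective is 1-strongly convex,
the minimizer satisfies a strengthened inequality with an extra quadratic term. -/
lemma strong_prox {n p : ℕ} {lam : ℝ} (hlam : 0 < lam)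
    (prox : (Fin n → ℝ) → (Fin n → ℝ))
    (hprox : ∀ z x : Fin n → ℝ,
      (1/2) * ∑ j, (prox z j - z j)^2 + lam * (∑ j, |prox z j|)^p ≤
      (1/2) * ∑ j, (x j - z j)^2 + lam * (∑ j, |x j|)^p)
    (z y : Fin n → ℝ) :
    (1/2) * ∑ j, (prox z j - z j)^2 + lam * (∑ j, |prox z j|)^p
      + (1/2) * ∑ j, (y j - prox z j)^2 ≤
    (1/2) * ∑ j, (y j - z j)^2 + lam * (∑ j, |y j|)^p := by
  set u : Fin n → ℝ := prox z with hu
  set D : ℝ := ∑ j, (y j - u j)^2 with hD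
  set Su : ℝ := ∑ j, (u j - z j)^2 with hSu
  set Sy : ℝ := ∑ j, (y j - z j)^2 with hSy
  set Gu : ℝ := lam * (∑ j, |u j|)^p with hGu
  set Gy : ℝ := lam * (∑ j, |y j|)^p with hGy
  have hDnn : 0 ≤ D := Finset.sum_nonneg fun j _ => sq_nonneg _
  have key : ∀ θ : ℝ, 0 < θ → θ < 1 →
      (1/2) * (1 - θ) * D ≤ ((1/2) * Sy + Gy) - ((1/2) * Su + Gu) := by
    intro θ hθ0 hθ1
    have hθ0' : 0 ≤ θ := le_of_lt hθ0
    have h1θ : 0 ≤ 1 - θ := by linarith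
    set w : Fin n → ℝ := fun j => (1 - θ) * u j + θ * y j with hw
    have hqw : ∑ j, (w j - z j)^2 = (1 - θ) * Su + θ * Sy - θ * (1 - θ) * D := by
      have h1 : ∀ j : Fin n, (w j - z j)^2 =
          (1 - θ) * (u j - z j)^2 + θ * (y j - z j)^2 - θ * (1 - θ) * (y j - u j)^2 := by
        intro j; simp only [hw]; ring
      rw [Finset.sum_congr rfl (fun j _ => h1 j), Finset.sum_sub_distrib,
        Finset.sum_add_distrib, ← Finset.mul_sum, ← Finset.mul_sum, ← Finset.mul_sum]
    have hNw : ∑ j, |w j| ≤ (1 - θ) * ∑ j, |u j| + θ * ∑ j, |y j| := by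
      rw [Finset.mul_sum, Finset.mul_sum, ← Finset.sum_add_distrib]
      refine Finset.sum_le_sum fun j _ => ?_
      calc |w j| ≤ |(1 - θ) * u j| + |θ * y j| := abs_add_le _ _
        _ = (1 - θ) * |u j| + θ * |y j| := by
            rw [abs_mul, abs_mul, abs_of_nonneg h1θ, abs_of_nonneg hθ0']
    have hNu : (0:ℝ) ≤ ∑ j, |u j| := Finset.sum_nonneg fun j _ => abs_nonneg _
    have hNy : (0:ℝ) ≤ ∑ j, |y j| := Finset.sum_nonneg fun j _ => abs_nonneg _
    have hNw0 : (0:ℝ) ≤ ∑ j, |w j| := Finset.sum_nonneg fun j _ => abs_nonneg _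
    have hpow1 : (∑ j, |w j|)^p ≤ ((1 - θ) * ∑ j, |u j| + θ * ∑ j, |y j|)^p :=
      pow_le_pow_left₀ hNw0 hNw p
    have hpow2 : ((1 - θ) * ∑ j, |u j| + θ * ∑ j, |y j|)^p ≤
        (1 - θ) * (∑ j, |u j|)^p + θ * (∑ j, |y j|)^p := by
      have := (convexOn_pow (𝕜 := ℝ) p).2 (Set.mem_Ici.mpr hNu) (Set.mem_Ici.mpr hNy)
        h1θ hθ0' (by ring)
      simpa [smul_eq_mul] using this
    have hgw : lam * (∑ j, |w j|)^p ≤ (1 - θ) * Gu + θ * Gy := by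
      rw [hGu, hGy]
      have : lam * (∑ j, |w j|)^p ≤ lam * ((1 - θ) * (∑ j, |u j|)^p + θ * (∑ j, |y j|)^p) :=
        mul_le_mul_of_nonneg_left (le_trans hpow1 hpow2) (le_of_lt hlam)
      linarith [this]
    have hmin := hprox z w
    rw [← hu, ← hSu, ← hGu, hqw] at hmin
    have h2 : θ * ((1/2) * (1 - θ) * D) ≤ θ * (((1/2) * Sy + Gy) - ((1/2) * Su + Gu)) := by
      nlinarith [hmin, hgw]
    exact le_of_mul_le_mul_left h2 hθ0
  have hfin := half_le_of_forall_theta D _ hDnn key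
  linarith

/-- Per-iteration estimate for the regularized Kaczmarz algorithm with
f(x) = λ‖x‖₁^p + (1/2)‖x‖²: for every solution x of Ax = b and every k,
f(xᵏ) − f(xᵏ⁺¹) ≤ ⟨zᵏ⁺¹, x−xᵏ⁺¹⟩ − ⟨zᵏ, x−xᵏ⟩ − t(1−t/2)⟨a_{i(k)}, xᵏ−x⟩²/‖a_{i(k)}‖². -/
theorem kaczmarz_per_iteration_estimate (m n : ℕ) (hm : 0 < m) (hn : 0 < n)
    (a : Fin m → Fin n → ℝ) (ha : ∀ i, a i ≠ 0) (b : Fin m → ℝ)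
    (p : ℕ) (hp : 0 < p) (lam : ℝ) (hlam : 0 < lam)
    (t : ℝ) (ht0 : 0 < t) (ht2 : t < 2)
    (f : (Fin n → ℝ) → ℝ)
    (hf : ∀ x, f x = lam * (∑ j, |x j|)^p + (1/2) * ∑ j, (x j)^2)
    (prox : (Fin n → ℝ) → (Fin n → ℝ))
    (hprox : ∀ z x : Fin n → ℝ,
      (1/2) * ∑ j, (prox z j - z j)^2 + lam * (∑ j, |prox z j|)^p ≤
      (1/2) * ∑ j, (x j - z j)^2 + lam * (∑ j, |x j|)^p)
    (idx : ℕ → Fin m)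
    (zseq xseq : ℕ → Fin n → ℝ)
    (hx : ∀ k, xseq k = prox (zseq k))
    (hz : ∀ k, zseq (k+1) = zseq k +
      ((t / ∑ j, (a (idx k) j)^2) * (b (idx k) - ∑ j, a (idx k) j * xseq k j)) • a (idx k)) :
    ∀ x : Fin n → ℝ, (∀ i, ∑ j, a i j * x j = b i) → ∀ k : ℕ,
      f (xseq k) - f (xseq (k+1)) ≤
        (∑ j, zseq (k+1) j * (x j - xseq (k+1) j))
          - (∑ j, zseq k j * (x j - xseq k j))
          - t * (1 - t/2) * (∑ j, a (idx k) j * (xseq k j - x j))^2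
              / (∑ j, (a (idx k) j)^2) := by
  intro x hxsol k
  set i : Fin m := idx k with hi
  set u : Fin n → ℝ := a i with hu
  set xk : Fin n → ℝ := xseq k with hxk
  set xk1 : Fin n → ℝ := xseq (k+1) with hxk1
  set z : Fin n → ℝ := zseq k with hzk
  set na : ℝ := ∑ j, (u j)^2 with hna
  set A2 : ℝ := ∑ j, z j * xk j with hA2
  set A3 : ℝ := ∑ j, z j * xk1 j with hA3
  set B1 : ℝ := ∑ j, u j * x j with hB1
  set B2 : ℝ := ∑ j, u j * xk j with hB2
  set B3 : ℝ := ∑ j, u j * xk1 j with hB3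
  set Qd : ℝ := ∑ j, (xk1 j - xk j)^2 with hQd
  set s : ℝ := B2 - B1 with hs
  set c : ℝ := (t / na) * (b i - B2) with hc
  -- key facts before making the definitions opaque
  have hxkp : xk = prox z := by rw [hxk, hzk]; exact hx k
  have hzz : zseq (k+1) = z + c • u := by
    have h0 := hz k
    rw [← hi, ← hu, ← hxk, ← hzk, ← hna, ← hB2, ← hc] at h0
    exact h0
  have hBb : B1 = b i := by rw [hB1, hu]; exact hxsol i
  have hna0 : 0 < na := by
    obtain ⟨j0, hj0⟩ := Function.ne_iff.mp (ha i)
    have hj0' : u j0 ≠ 0 := by rw [hu]; exact hj0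
    have h1 : (0:ℝ) < (u j0)^2 := pow_two_pos_of_ne_zero hj0'
    rw [hna]
    exact lt_of_lt_of_le h1 (Finset.single_le_sum (fun j _ => sq_nonneg (u j))
      (Finset.mem_univ j0))
  have hQdnn : 0 ≤ Qd := by
    rw [hQd]; exact Finset.sum_nonneg fun j _ => sq_nonneg _
  -- strong prox inequality at z with comparison point xk1
  have hsp := strong_prox hlam prox hprox z xk1
  rw [← hxkp, ← hQd] at hsp
  -- expand the quadratic sums
  have expand : ∀ (v : Fin n → ℝ), ∑ j, (v j - z j)^2
      = (∑ j, (v j)^2) - 2 * (∑ j, z j * v j) + ∑ j, (z j)^2 := by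
    intro v
    have h1 : ∀ j : Fin n, (v j - z j)^2 = (v j)^2 - 2 * (z j * v j) + (z j)^2 := by
      intro j; ring
    rw [Finset.sum_congr rfl (fun j _ => h1 j), Finset.sum_add_distrib,
      Finset.sum_sub_distrib, ← Finset.mul_sum]
  rw [expand xk, expand xk1, ← hA2, ← hA3] at hsp
  -- Cauchy-Schwarz for the correction term
  have hCS : (B3 - B2)^2 ≤ na * Qd := by
    have h1 : B3 - B2 = ∑ j, u j * (xk1 j - xk j) := by
      have h2 : ∀ j : Fin n, u j * (xk1 j - xk j) = u j * xk1 j - u j * xk j := by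
        intro j; ring
      rw [Finset.sum_congr rfl (fun j _ => h2 j), Finset.sum_sub_distrib, ← hB3, ← hB2]
    rw [h1, hna, hQd]
    exact Finset.sum_mul_sq_le_sq_mul_sq Finset.univ u (fun j => xk1 j - xk j)
  have hcs : c = -(t/na) * s := by rw [hc, hs, hBb]; ring
  clear_value i u xk xk1 z na A2 A3 B1 B2 B3 Qd s c
  -- basic estimate: f(xk) - f(xk1) ≤ A2 - A3 - (1/2) Qd
  have hbasic : f xk - f xk1 ≤ A2 - A3 - (1/2) * Qd := by
    rw [hf xk, hf xk1]
    linarith [hsp]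
  -- rewrite goal sums
  have hz' : ∀ j, zseq (k+1) j = z j + c * u j := by
    intro j; rw [hzz]; simp [smul_eq_mul]
  have egoal1 : (∑ j, zseq (k+1) j * (x j - xk1 j))
      = (∑ j, z j * x j) - A3 + c * (B1 - B3) := by
    have h1 : ∀ j : Fin n, zseq (k+1) j * (x j - xk1 j)
        = z j * x j - z j * xk1 j + c * (u j * x j - u j * xk1 j) := by
      intro j; rw [hz' j]; ring
    rw [Finset.sum_congr rfl (fun j _ => h1 j), Finset.sum_add_distrib,
      Finset.sum_sub_distrib, ← Finset.mul_sum, Finset.sum_sub_distrib, ← hA3, ← hB1, ← hB3]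
  have egoal2 : (∑ j, z j * (x j - xk j)) = (∑ j, z j * x j) - A2 := by
    have h1 : ∀ j : Fin n, z j * (x j - xk j) = z j * x j - z j * xk j := by
      intro j; ring
    rw [Finset.sum_congr rfl (fun j _ => h1 j), Finset.sum_sub_distrib, ← hA2]
  have egoal3 : (∑ j, u j * (xk j - x j)) = s := by
    have h1 : ∀ j : Fin n, u j * (xk j - x j) = u j * xk j - u j * x j := by
      intro j; ring
    rw [Finset.sum_congr rfl (fun j _ => h1 j), Finset.sum_sub_distrib, ← hB2, ← hB1, hs]
  rw [egoal1, egoal2, egoal3, hcs]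
  have hnane : na ≠ 0 := ne_of_gt hna0
  have h2na : (0:ℝ) < 2 * na := by linarith
  have hkey : -(1/2) * Qd ≤ (-(t/na) * s) * (B1 - B3) - t * (1 - t/2) * s^2 / na := by
    have e1 : (-(t/na) * s) * (B1 - B3) - t * (1 - t/2) * s^2 / na
        = (2 * t * s * (B3 - B2) + t^2 * s^2) / (2 * na) := by
      rw [hs]; field_simp; ring
    have e2 : -(1/2) * Qd = (-(na * Qd)) / (2 * na) := by
      field_simp
    rw [e1, e2]
    refine (div_le_div_iff_of_pos_right h2na).mpr ?_
    nlinarith [hCS, sq_nonneg (B3 - B2 + t * s)]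
  linarith [hbasic, hkey]
end

section
/- Let m, n be positive integers, A ∈ ℝ^{m×n} with rows a₁,…,a_m all nonzero, and b ∈ ℝ^m such that the system A x = b is consistent. Let p be a positive integer, λ > 0, and 0 < t < 2. Define f(x) = λ‖x‖₁^p + (1/2)‖x‖² and let x̂ be the unique minimizer of f subject to A x = b; assume some subgradient of f at x̂ lies in the row space of A (the range of Aᵀ). Let prox(z) denote the unique minimizer of x ↦ (1/2)‖x − z‖² + λ‖x‖₁^p. Starting from z⁰ in the row space of A, define x⁰ = prox(z⁰) and, for k ≥ 0 with the cyclic choice i(k) = (k mod m) + 1, z^{k+1} = z^k + (t/‖a_{i(k)}‖²)·(b_{i(k)} − ⟨a_{i(k)}, x^k⟩)·a_{i(k)} and x^{k+1} = prox(z^{k+1}). Then the sequence (x^k) converges to x̂. -/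
open Finset Filter Real

set_option maxHeartbeats 1600000

section KaczHelpers

lemma kz_sum_sq_expand {n : ℕ} (u v : Fin n → ℝ) :
    ∑ j, (u j + v j)^2 = ∑ j, (u j)^2 + 2 * (∑ j, u j * v j) + ∑ j, (v j)^2 := by
  rw [Finset.mul_sum, ← Finset.sum_add_distrib, ← Finset.sum_add_distrib]
  exact Finset.sum_congr rfl fun j _ => by ring

lemma kz_sum_mul_sub {n : ℕ} (u v c : Fin n → ℝ) :
    ∑ j, (u j - v j) * c j = ∑ j, u j * c j - ∑ j, v j * c j := by
  rw [← Finset.sum_sub_distrib]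
  exact Finset.sum_congr rfl fun j _ => by ring

lemma kz_cs {n : ℕ} (u v : Fin n → ℝ) :
    |∑ j, u j * v j| ≤ Real.sqrt (∑ j, (u j)^2) * Real.sqrt (∑ j, (v j)^2) := by
  have h := Finset.sum_mul_sq_le_sq_mul_sq Finset.univ u v
  calc |∑ j, u j * v j| = Real.sqrt ((∑ j, u j * v j)^2) := (Real.sqrt_sq_eq_abs _).symm
    _ ≤ Real.sqrt ((∑ j, (u j)^2) * ∑ j, (v j)^2) := Real.sqrt_le_sqrt h
    _ = _ := Real.sqrt_mul (by positivity) _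

lemma kz_two_sq {n : ℕ} (u v : Fin n → ℝ) :
    ∑ j, (u j)^2 ≤ 2 * ∑ j, (u j - v j)^2 + 2 * ∑ j, (v j)^2 := by
  rw [Finset.mul_sum, Finset.mul_sum, ← Finset.sum_add_distrib]
  exact Finset.sum_le_sum fun j _ => by nlinarith [sq_nonneg (u j - 2 * v j)]

lemma kz_l1_le {n : ℕ} (v : Fin n → ℝ) :
    ∑ j, |v j| ≤ Real.sqrt n * Real.sqrt (∑ j, (v j)^2) := by
  have h : abs (∑ j, (1:ℝ) * |v j|) ≤
      Real.sqrt (∑ _j : Fin n, (1:ℝ)^2) * Real.sqrt (∑ j, |v j|^2) := by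
    exact kz_cs (fun _ => (1:ℝ)) (fun j => |v j|)
  simp only [one_mul, one_pow, sq_abs, Finset.sum_const, Finset.card_univ, Fintype.card_fin,
    nsmul_eq_mul, mul_one] at h
  calc ∑ j, |v j| ≤ abs (∑ j, |v j|) := le_abs_self _
    _ ≤ _ := h

lemma kz_pow_combo {p : ℕ} {a b s : ℝ} (ha : 0 ≤ a) (hb : 0 ≤ b) (hs0 : 0 ≤ s) (hs1 : s ≤ 1) :
    ((1-s)*a + s*b)^p ≤ (1-s)*a^p + s*b^p := by
  have := (convexOn_pow (𝕜 := ℝ) p).2 (Set.mem_Ici.2 ha) (Set.mem_Ici.2 hb)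
    (by linarith : (0:ℝ) ≤ 1-s) hs0 (by ring)
  simpa [smul_eq_mul] using this

lemma kz_minkowski {n : ℕ} (u v : Fin n → ℝ) :
    Real.sqrt (∑ j, (u j + v j)^2) ≤ Real.sqrt (∑ j, (u j)^2) + Real.sqrt (∑ j, (v j)^2) := by
  have h1 : ∑ j, (u j + v j)^2 ≤ (Real.sqrt (∑ j, (u j)^2) + Real.sqrt (∑ j, (v j)^2))^2 := by
    rw [kz_sum_sq_expand]
    have h2 : ∑ j, u j * v j ≤ Real.sqrt (∑ j, (u j)^2) * Real.sqrt (∑ j, (v j)^2) :=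
      (le_abs_self _).trans (kz_cs u v)
    have e1 : Real.sqrt (∑ j, (u j)^2) ^ 2 = ∑ j, (u j)^2 := Real.sq_sqrt (by positivity)
    have e2 : Real.sqrt (∑ j, (v j)^2) ^ 2 = ∑ j, (v j)^2 := Real.sq_sqrt (by positivity)
    nlinarith
  calc Real.sqrt (∑ j, (u j + v j)^2)
      ≤ Real.sqrt ((Real.sqrt (∑ j, (u j)^2) + Real.sqrt (∑ j, (v j)^2))^2) :=
        Real.sqrt_le_sqrt h1
    _ = _ := Real.sqrt_sq (by positivity)

lemma kz_prox_subgrad {n p : ℕ} {lam : ℝ} (hlam : 0 < lam)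
    (prox : (Fin n → ℝ) → (Fin n → ℝ))
    (hprox : ∀ z x : Fin n → ℝ,
      (1/2) * ∑ j, (prox z j - z j)^2 + lam * (∑ j, |prox z j|)^p ≤
      (1/2) * ∑ j, (x j - z j)^2 + lam * (∑ j, |x j|)^p)
    (z w : Fin n → ℝ) :
    lam * (∑ j, |prox z j|)^p + ∑ j, (z j - prox z j) * (w j - prox z j) ≤
      lam * (∑ j, |w j|)^p := by
  set x : Fin n → ℝ := prox z with hxdef
  set Q : ℝ := ∑ j, (w j - x j)^2 with hQdef
  have hQ0 : 0 ≤ Q := by positivity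
  have key : ∀ s : ℝ, 0 < s → s ≤ 1 →
      lam * (∑ j, |x j|)^p + ∑ j, (z j - x j) * (w j - x j) ≤
        lam * (∑ j, |w j|)^p + s/2 * Q := by
    intro s hs0 hs1
    have h1 := hprox z (fun j => x j + s * (w j - x j))
    have hquad : ∑ j, ((fun j => x j + s * (w j - x j)) j - z j)^2 =
        ∑ j, (x j - z j)^2 + 2 * (s * ∑ j, (x j - z j) * (w j - x j)) + s^2 * Q := by
      have := kz_sum_sq_expand (fun j => x j - z j) (fun j => s * (w j - x j))
      calc ∑ j, ((fun j => x j + s * (w j - x j)) j - z j)^2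
          = ∑ j, ((x j - z j) + s * (w j - x j))^2 :=
            Finset.sum_congr rfl fun j _ => by ring
        _ = ∑ j, (x j - z j)^2 + 2 * (∑ j, (x j - z j) * (s * (w j - x j))) +
            ∑ j, (s * (w j - x j))^2 := this
        _ = _ := by
            have e1 : (∑ j, (x j - z j) * (s * (w j - x j))) =
                s * ∑ j, (x j - z j) * (w j - x j) := by
              rw [Finset.mul_sum]; exact Finset.sum_congr rfl fun j _ => by ring
            have e2 : (∑ j, (s * (w j - x j))^2) = s^2 * Q := by
              rw [hQdef, Finset.mul_sum]; exact Finset.sum_congr rfl fun j _ => by ring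
            rw [e1, e2]
    have hconv : lam * (∑ j, |x j + s * (w j - x j)|)^p ≤
        (1-s) * (lam * (∑ j, |x j|)^p) + s * (lam * (∑ j, |w j|)^p) := by
      have habs : ∑ j, |x j + s * (w j - x j)| ≤ (1-s) * ∑ j, |x j| + s * ∑ j, |w j| := by
        rw [Finset.mul_sum, Finset.mul_sum, ← Finset.sum_add_distrib]
        refine Finset.sum_le_sum fun j _ => ?_
        calc |x j + s * (w j - x j)| = |(1-s) * x j + s * w j| := by ring_nf
          _ ≤ |(1-s) * x j| + |s * w j| := abs_add_le _ _
          _ = (1-s) * |x j| + s * |w j| := by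
              rw [abs_mul, abs_mul, abs_of_nonneg (by linarith : (0:ℝ) ≤ 1-s),
                abs_of_nonneg hs0.le]
      have hp1 : (∑ j, |x j + s * (w j - x j)|)^p ≤
          ((1-s) * ∑ j, |x j| + s * ∑ j, |w j|)^p :=
        pow_le_pow_left₀ (by positivity) habs p
      have hp2 : ((1-s) * ∑ j, |x j| + s * ∑ j, |w j|)^p ≤
          (1-s) * (∑ j, |x j|)^p + s * (∑ j, |w j|)^p :=
        kz_pow_combo (by positivity) (by positivity) hs0.le hs1
      calc lam * (∑ j, |x j + s * (w j - x j)|)^p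
          ≤ lam * ((1-s) * (∑ j, |x j|)^p + s * (∑ j, |w j|)^p) :=
            mul_le_mul_of_nonneg_left (hp1.trans hp2) hlam.le
        _ = _ := by ring
    rw [hquad] at h1
    have h2 : 0 ≤ s * (∑ j, (x j - z j) * (w j - x j)) + s^2/2 * Q
        - s * (lam * (∑ j, |x j|)^p) + s * (lam * (∑ j, |w j|)^p) := by nlinarith [hconv, h1]
    have h3 : 0 ≤ (∑ j, (x j - z j) * (w j - x j)) + s/2 * Q
        - lam * (∑ j, |x j|)^p + lam * (∑ j, |w j|)^p := by
      exact (mul_nonneg_iff_of_pos_left hs0).mp (by nlinarith [h2] :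
        0 ≤ s * ((∑ j, (x j - z j) * (w j - x j)) + s/2 * Q
          - lam * (∑ j, |x j|)^p + lam * (∑ j, |w j|)^p))
    have hflip : ∑ j, (z j - x j) * (w j - x j) = -∑ j, (x j - z j) * (w j - x j) := by
      rw [← Finset.sum_neg_distrib]
      exact Finset.sum_congr rfl fun j _ => by ring
    rw [hflip]; linarith
  refine le_of_forall_pos_le_add fun ε hε => ?_
  have hs0 : (0:ℝ) < min 1 (ε / (Q+1)) := lt_min one_pos (by positivity)
  have hs1 : min 1 (ε / (Q+1)) ≤ 1 := min_le_left _ _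
  have h := key _ hs0 hs1
  have hsQ : min 1 (ε / (Q+1)) / 2 * Q ≤ ε := by
    have h1 : min 1 (ε / (Q+1)) ≤ ε / (Q+1) := min_le_right _ _
    have h2 : (0:ℝ) < Q + 1 := by linarith
    have h3 : min 1 (ε / (Q+1)) * (Q+1) ≤ ε := by
      rw [← le_div_iff₀ h2]; exact h1
    nlinarith [hs0.le]
  linarith

lemma kz_f_subgrad {n p : ℕ} {lam : ℝ} (hlam : 0 < lam)
    {f : (Fin n → ℝ) → ℝ}
    (hf : ∀ x, f x = lam * (∑ j, |x j|)^p + (1/2) * ∑ j, (x j)^2)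
    (prox : (Fin n → ℝ) → (Fin n → ℝ))
    (hprox : ∀ z x : Fin n → ℝ,
      (1/2) * ∑ j, (prox z j - z j)^2 + lam * (∑ j, |prox z j|)^p ≤
      (1/2) * ∑ j, (x j - z j)^2 + lam * (∑ j, |x j|)^p)
    (z w : Fin n → ℝ) :
    f (prox z) + ∑ j, z j * (w j - prox z j) + (1/2) * ∑ j, (w j - prox z j)^2 ≤ f w := by
  rw [hf w, hf (prox z)]
  set x : Fin n → ℝ := prox z with hxdef
  have hw2 : ∑ j, (w j)^2 =
      ∑ j, (x j)^2 + 2 * (∑ j, x j * (w j - x j)) + ∑ j, (w j - x j)^2 := by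
    rw [← kz_sum_sq_expand x (fun j => w j - x j)]
    exact Finset.sum_congr rfl fun j _ => by ring
  have hsplit : ∑ j, (z j - x j) * (w j - x j) =
      ∑ j, z j * (w j - x j) - ∑ j, x j * (w j - x j) :=
    kz_sum_mul_sub z x (fun j => w j - x j)
  have hkey := kz_prox_subgrad hlam prox hprox z w
  rw [← hxdef, hsplit] at hkey
  linarith

end KaczHelpers

/-- Convergence of the cyclic regularized Kaczmarz algorithm for
min λ‖x‖₁^p + (1/2)‖x‖² subject to Ax = b: starting from z⁰ in the row space of
A, with cyclic index selection and step size 0 < t < 2, the iterates xᵏ converge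
to the constrained minimizer x̂ (whose subdifferential meets the row space). -/
theorem kaczmarz_cyclic_convergence (m n : ℕ) (hm : 0 < m) (hn : 0 < n)
    (a : Fin m → Fin n → ℝ) (ha : ∀ i, a i ≠ 0) (b : Fin m → ℝ)
    (p : ℕ) (hp : 0 < p) (lam : ℝ) (hlam : 0 < lam)
    (t : ℝ) (ht0 : 0 < t) (ht2 : t < 2)
    (f : (Fin n → ℝ) → ℝ)
    (hf : ∀ x, f x = lam * (∑ j, |x j|)^p + (1/2) * ∑ j, (x j)^2)
    (xhat : Fin n → ℝ)
    (hxhat : ∀ i, ∑ j, a i j * xhat j = b i)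
    (hxhatmin : ∀ x : Fin n → ℝ, (∀ i, ∑ j, a i j * x j = b i) → f xhat ≤ f x)
    (hsubgrad : ∃ y : Fin m → ℝ, ∀ w : Fin n → ℝ,
      f xhat + ∑ j, (∑ i, y i * a i j) * (w j - xhat j) ≤ f w)
    (prox : (Fin n → ℝ) → (Fin n → ℝ))
    (hprox : ∀ z x : Fin n → ℝ,
      (1/2) * ∑ j, (prox z j - z j)^2 + lam * (∑ j, |prox z j|)^p ≤
      (1/2) * ∑ j, (x j - z j)^2 + lam * (∑ j, |x j|)^p)
    (idx : ℕ → Fin m) (hidx : ∀ k, (idx k : ℕ) = k % m)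
    (zseq xseq : ℕ → Fin n → ℝ)
    (hz0 : ∃ y : Fin m → ℝ, zseq 0 = fun j => ∑ i, y i * a i j)
    (hx : ∀ k, xseq k = prox (zseq k))
    (hz : ∀ k, zseq (k+1) = zseq k +
      ((t / ∑ j, (a (idx k) j)^2) * (b (idx k) - ∑ j, a (idx k) j * xseq k j)) • a (idx k)) :
    Filter.Tendsto xseq Filter.atTop (nhds xhat) := by
  obtain ⟨y0, hy0⟩ := hsubgrad
  -- basic quantities
  have hsqa : ∀ i, 0 < ∑ j, (a i j)^2 := by
    intro i
    have hex : ∃ j, a i j ≠ 0 := by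
      by_contra h; push_neg at h; exact ha i (funext h)
    obtain ⟨j, hj⟩ := hex
    exact Finset.sum_pos' (fun j _ => sq_nonneg _) ⟨j, Finset.mem_univ j, by positivity⟩
  obtain ⟨sqa, hsqadef⟩ : ∃ sqa : Fin m → ℝ, sqa = fun i => ∑ j, (a i j)^2 := ⟨_, rfl⟩
  have hsqa' : ∀ i, 0 < sqa i := by intro i; rw [hsqadef]; exact hsqa i
  obtain ⟨r, hrdef⟩ : ∃ r : ℕ → ℝ,
    r = fun k => b (idx k) - ∑ j, a (idx k) j * xseq k j := ⟨_, rfl⟩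
  obtain ⟨D, hDdef⟩ : ∃ D : ℕ → ℝ,
    D = fun k => f xhat - f (xseq k) - ∑ j, zseq k j * (xhat j - xseq k j) := ⟨_, rfl⟩
  obtain ⟨c, hcdef⟩ : ∃ c : ℝ, c = t - t^2/2 := ⟨_, rfl⟩
  have hc : 0 < c := by rw [hcdef]; nlinarith
  -- F1: strengthened subgradient inequality at each iterate
  have F1 : ∀ (k : ℕ) (w : Fin n → ℝ), f (xseq k) + ∑ j, zseq k j * (w j - xseq k j)
      + (1/2) * ∑ j, (w j - xseq k j)^2 ≤ f w := by
    intro k w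
    have h := kz_f_subgrad hlam hf prox hprox (zseq k) w
    rw [← hx k] at h
    exact h
  -- F2: D dominates half squared distance to xhat
  have F2 : ∀ k, (1/2) * ∑ j, (xhat j - xseq k j)^2 ≤ D k := by
    intro k
    have h := F1 k xhat
    simp only [hDdef]
    linarith
  -- F3: one-step descent estimate
  have F3 : ∀ k,
      (1/2) * ∑ j, (xseq (k+1) j - xseq k j - (t / sqa (idx k) * r k) * a (idx k) j)^2
        + c * (r k)^2 / sqa (idx k) ≤ D k - D (k+1) := by
    intro k
    set i : Fin m := idx k with hidef
    set α : ℝ := t / sqa i * r k with hαdef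
    have hrk : r k = b i - ∑ j, a i j * xseq k j := by rw [hrdef, hidef]
    have hsqak : sqa i = ∑ j, (a i j)^2 := by rw [hsqadef]
    have hzz : ∀ j, zseq (k+1) j - zseq k j = α * a i j := by
      intro j
      rw [hz k]
      simp only [Pi.add_apply, Pi.smul_apply, smul_eq_mul, ← hidef, ← hsqak, ← hrk, ← hαdef]
      ring
    set Δ : Fin n → ℝ := fun j => xseq (k+1) j - xseq k j with hΔdef
    set G : ℝ := ∑ j, a i j * Δ j with hGdef
    have t1 : ∑ j, (zseq (k+1) j - zseq k j) * (xhat j - xseq (k+1) j)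
        = α * ∑ j, a i j * (xhat j - xseq (k+1) j) := by
      rw [Finset.mul_sum]
      exact Finset.sum_congr rfl fun j _ => by rw [hzz j]; ring
    have t2 : ∑ j, a i j * (xhat j - xseq (k+1) j) = r k - G := by
      have s1 : ∑ j, a i j * (xhat j - xseq (k+1) j)
          = ∑ j, a i j * xhat j - ∑ j, a i j * xseq (k+1) j := by
        rw [← Finset.sum_sub_distrib]; exact Finset.sum_congr rfl fun j _ => by ring
      have s2 : G = ∑ j, a i j * xseq (k+1) j - ∑ j, a i j * xseq k j := by
        rw [hGdef, ← Finset.sum_sub_distrib]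
        exact Finset.sum_congr rfl fun j _ => by rw [hΔdef]; ring
      rw [s1, hxhat i, hrk, s2]; ring
    have t3 : ∑ j, (zseq (k+1) j - zseq k j) * (xhat j - xseq (k+1) j)
        = ∑ j, zseq (k+1) j * (xhat j - xseq (k+1) j)
          - ∑ j, zseq k j * (xhat j - xseq (k+1) j) :=
      kz_sum_mul_sub _ _ _
    have e4 : ∑ j, zseq k j * (xhat j - xseq k j)
        = ∑ j, zseq k j * (xhat j - xseq (k+1) j) + ∑ j, zseq k j * (Δ j) := by
      rw [← Finset.sum_add_distrib]
      exact Finset.sum_congr rfl fun j _ => by rw [hΔdef]; ring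
    have e3 : ∑ j, (Δ j - α * a i j)^2
        = ∑ j, (Δ j)^2 - 2 * α * G + α^2 * sqa i := by
      have h := kz_sum_sq_expand Δ (fun j => -(α * a i j))
      have e1 : ∑ j, (Δ j + -(α * a i j))^2 = ∑ j, (Δ j - α * a i j)^2 :=
        Finset.sum_congr rfl fun j _ => by ring
      have e2 : ∑ j, Δ j * -(α * a i j) = -(α * G) := by
        rw [hGdef, Finset.mul_sum, ← Finset.sum_neg_distrib]
        exact Finset.sum_congr rfl fun j _ => by ring
      have e5 : ∑ j, (-(α * a i j))^2 = α^2 * sqa i := by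
        rw [hsqak, Finset.mul_sum]
        exact Finset.sum_congr rfl fun j _ => by ring
      rw [e1] at h; rw [h, e2, e5]; ring
    have hsne : sqa i ≠ 0 := (hsqa' i).ne'
    have hαr : α * r k = t * (r k)^2 / sqa i := by rw [hαdef]; field_simp
    have hα2 : α^2 * sqa i = t^2 * (r k)^2 / sqa i := by rw [hαdef]; field_simp
    have hce : c * (r k)^2 / sqa i = α * r k - α^2 * sqa i / 2 := by
      rw [hαr, hα2, hcdef]; field_simp
    have hA := F1 k (xseq (k+1))
    have hAΔ : f (xseq k) + ∑ j, zseq k j * Δ j + (1/2) * ∑ j, (Δ j)^2 ≤ f (xseq (k+1)) := by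
      have e6 : ∑ j, zseq k j * (xseq (k+1) j - xseq k j) = ∑ j, zseq k j * Δ j :=
        Finset.sum_congr rfl fun j _ => by rw [hΔdef]
      have e7 : ∑ j, (xseq (k+1) j - xseq k j)^2 = ∑ j, (Δ j)^2 :=
        Finset.sum_congr rfl fun j _ => by rw [hΔdef]
      rw [e6, e7] at hA; exact hA
    have hDk : D k = f xhat - f (xseq k) - ∑ j, zseq k j * (xhat j - xseq k j) := by
      rw [hDdef]
    have hDk1 : D (k+1) = f xhat - f (xseq (k+1))
        - ∑ j, zseq (k+1) j * (xhat j - xseq (k+1) j) := by rw [hDdef]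
    have hgoal : ∑ j, (xseq (k+1) j - xseq k j - (t / sqa (idx k) * r k) * a (idx k) j)^2
        = ∑ j, (Δ j - α * a i j)^2 :=
      Finset.sum_congr rfl fun j _ => by rw [hΔdef]
    rw [hgoal, hce, e3]
    have key : D k - D (k+1) = (f (xseq (k+1)) - f (xseq k) - ∑ j, zseq k j * Δ j)
        + α * (r k - G) := by
      rw [hDk, hDk1, e4]
      have := t3
      rw [t1, t2] at this
      linarith
    nlinarith [hAΔ, key]
  -- nonnegativity and monotonicity of D
  have hD0 : ∀ k, 0 ≤ D k := fun k => le_trans (by positivity) (F2 k)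
  have F4 : ∀ k, D (k+1) ≤ D k := by
    intro k
    have h := F3 k
    have h1 : (0:ℝ) ≤ (1/2) * ∑ j, (xseq (k+1) j - xseq k j
        - (t / sqa (idx k) * r k) * a (idx k) j)^2 := by positivity
    have h2 : (0:ℝ) ≤ c * (r k)^2 / sqa (idx k) :=
      div_nonneg (by positivity) (hsqa' _).le
    linarith
  have hDanti : Antitone D := antitone_nat_of_succ_le F4
  have hDbdd : BddBelow (Set.range D) := ⟨0, fun x ⟨k, hk⟩ => hk ▸ hD0 k⟩
  have hDlim : Tendsto D atTop (nhds (⨅ k, D k)) := tendsto_atTop_ciInf hDanti hDbdd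
  have hDdiff : Tendsto (fun k => D k - D (k+1)) atTop (nhds 0) := by
    have h2 : Tendsto (fun k => D (k+1)) atTop (nhds (⨅ k, D k)) :=
      hDlim.comp (tendsto_add_atTop_nat 1)
    simpa using hDlim.sub h2
  -- weighted residuals tend to zero
  have F5 : Tendsto (fun k => (r k)^2 / sqa (idx k)) atTop (nhds 0) := by
    refine squeeze_zero (fun k => div_nonneg (by positivity) (hsqa' _).le)
      (fun k => ?_) (by simpa using hDdiff.div_const c)
    have h := F3 k
    have h1 : (0:ℝ) ≤ (1/2) * ∑ j, (xseq (k+1) j - xseq k j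
        - (t / sqa (idx k) * r k) * a (idx k) j)^2 := by positivity
    rw [le_div_iff₀ hc]
    calc (r k)^2 / sqa (idx k) * c = c * (r k)^2 / sqa (idx k) := by ring
      _ ≤ D k - D (k+1) := by linarith
  have F5b : Tendsto (fun k => ∑ j, (xseq (k+1) j - xseq k j
      - (t / sqa (idx k) * r k) * a (idx k) j)^2) atTop (nhds 0) := by
    refine squeeze_zero (fun k => by positivity) (fun k => ?_)
      (by simpa using hDdiff.const_mul 2)
    have h := F3 k
    have h2 : (0:ℝ) ≤ c * (r k)^2 / sqa (idx k) := div_nonneg (by positivity) (hsqa' _).le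
    linarith
  -- successive differences tend to zero
  have hS : Tendsto (fun k => ∑ j, (xseq (k+1) j - xseq k j)^2) atTop (nhds 0) := by
    have hbound : ∀ k, ∑ j, (xseq (k+1) j - xseq k j)^2 ≤
        2 * ∑ j, (xseq (k+1) j - xseq k j - (t / sqa (idx k) * r k) * a (idx k) j)^2
          + 2 * (t^2 * ((r k)^2 / sqa (idx k))) := by
      intro k
      have h := kz_two_sq (fun j => xseq (k+1) j - xseq k j)
        (fun j => (t / sqa (idx k) * r k) * a (idx k) j)
      have e1 : ∑ j, ((t / sqa (idx k) * r k) * a (idx k) j)^2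
          = t^2 * ((r k)^2 / sqa (idx k)) := by
        have hsa : sqa (idx k) = ∑ j, (a (idx k) j)^2 := by rw [hsqadef]
        rw [eq_comm] at hsa
        calc ∑ j, ((t / sqa (idx k) * r k) * a (idx k) j)^2
            = (t / sqa (idx k) * r k)^2 * ∑ j, (a (idx k) j)^2 := by
              rw [Finset.mul_sum]; exact Finset.sum_congr rfl fun j _ => by ring
          _ = (t / sqa (idx k) * r k)^2 * sqa (idx k) := by rw [hsa]
          _ = t^2 * ((r k)^2 / sqa (idx k)) := by
              have hne := (hsqa' (idx k)).ne'
              field_simp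
      rw [e1] at h
      exact h
    refine squeeze_zero (fun k => by positivity) hbound ?_
    have h1 := F5b.const_mul 2
    have h2 := (F5.const_mul (t^2)).const_mul 2
    simpa using h1.add h2
  -- selected residuals tend to zero
  have hr0 : Tendsto r atTop (nhds 0) := by
    obtain ⟨Ma, hMa⟩ : ∃ Ma : ℝ, ∀ i, sqa i ≤ Ma :=
      ⟨∑ i, sqa i, fun i => Finset.single_le_sum (fun i _ => (hsqa' i).le) (Finset.mem_univ i)⟩
    have hbound : ∀ k, ‖r k‖ ≤ Real.sqrt (Ma * ((r k)^2 / sqa (idx k))) := by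
      intro k
      have hs := hsqa' (idx k)
      have hX : 0 ≤ (r k)^2 / sqa (idx k) := div_nonneg (sq_nonneg _) hs.le
      have h1 : (r k)^2 ≤ Ma * ((r k)^2 / sqa (idx k)) := by
        calc (r k)^2 = ((r k)^2 / sqa (idx k)) * sqa (idx k) :=
              (div_mul_cancel₀ _ hs.ne').symm
          _ ≤ ((r k)^2 / sqa (idx k)) * Ma := mul_le_mul_of_nonneg_left (hMa _) hX
          _ = Ma * ((r k)^2 / sqa (idx k)) := mul_comm _ _
      calc ‖r k‖ = Real.sqrt ((r k)^2) := (Real.sqrt_sq_eq_abs _).symm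
        _ ≤ _ := Real.sqrt_le_sqrt h1
    refine squeeze_zero_norm hbound ?_
    have := (F5.const_mul Ma).sqrt
    simpa using this
  have hsqrtS : Tendsto (fun k => Real.sqrt (∑ j, (xseq (k+1) j - xseq k j)^2))
      atTop (nhds 0) := by simpa using hS.sqrt
  -- all row residuals tend to zero
  have hρ : ∀ i₀ : Fin m, Tendsto (fun k => b i₀ - ∑ j, a i₀ j * xseq k j)
      atTop (nhds 0) := by
    intro i₀
    set K : ℕ → ℕ := fun k => (i₀ : ℕ) + (k / m + 1) * m with hKdef
    have hK1 : ∀ k, k ≤ K k := by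
      intro k
      have e := Nat.div_add_mod k m
      have hlt := Nat.mod_lt k hm
      have : k < K k := by
        calc k = m * (k/m) + k % m := e.symm
          _ < m * (k/m) + m := by omega
          _ = (k/m + 1) * m := by ring
          _ ≤ (i₀ : ℕ) + (k/m + 1) * m := Nat.le_add_left _ _
      exact this.le
    have hK2 : ∀ k, K k ≤ k + 2 * m := by
      intro k
      have h3 : k / m * m ≤ k := Nat.div_mul_le_self k m
      have h4 : (i₀ : ℕ) < m := i₀.isLt
      calc K k = ((i₀ : ℕ) + k/m*m) + m := by rw [hKdef]; ring
        _ ≤ (m + k) + m := Nat.add_le_add (Nat.add_le_add h4.le h3) le_rfl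
        _ = k + 2*m := by ring
    have hKidx : ∀ k, idx (K k) = i₀ := by
      intro k
      have h : K k % m = (i₀ : ℕ) := by
        rw [hKdef]
        simp only
        rw [Nat.add_mul_mod_self_right]
        exact Nat.mod_eq_of_lt i₀.isLt
      exact Fin.ext (by rw [hidx, h])
    have hbound : ∀ k, ‖b i₀ - ∑ j, a i₀ j * xseq k j‖ ≤ |r (K k)| +
        Real.sqrt (sqa i₀) * ∑ l ∈ Finset.range (2*m),
          Real.sqrt (∑ j, (xseq (k+l+1) j - xseq (k+l) j)^2) := by
      intro k
      set d : ℕ → ℝ := fun l => ∑ j, a i₀ j * xseq l j with hddef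
      have tele : ∑ l ∈ Finset.Ico k (K k), (d (l+1) - d l) = d (K k) - d k := by
        rw [Finset.sum_Ico_eq_sub _ (hK1 k), Finset.sum_range_sub, Finset.sum_range_sub]
        ring
      have hrK : r (K k) = b i₀ - d (K k) := by
        rw [hrdef]; simp only [hKidx k, hddef]
      have hsplit : b i₀ - d k = r (K k) + ∑ l ∈ Finset.Ico k (K k), (d (l+1) - d l) := by
        rw [tele, hrK]; ring
      have hterm : ∀ l, |d (l+1) - d l| ≤
          Real.sqrt (sqa i₀) * Real.sqrt (∑ j, (xseq (l+1) j - xseq l j)^2) := by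
        intro l
        have h1 : d (l+1) - d l = ∑ j, a i₀ j * (xseq (l+1) j - xseq l j) := by
          rw [hddef]; simp only
          rw [← Finset.sum_sub_distrib]
          exact Finset.sum_congr rfl fun j _ => by ring
        rw [h1, hsqadef]
        exact kz_cs (a i₀) (fun j => xseq (l+1) j - xseq l j)
      calc ‖b i₀ - ∑ j, a i₀ j * xseq k j‖ = |b i₀ - d k| := rfl
        _ ≤ |r (K k)| + |∑ l ∈ Finset.Ico k (K k), (d (l+1) - d l)| := by
            rw [hsplit]; exact abs_add_le _ _
        _ ≤ |r (K k)| + ∑ l ∈ Finset.Ico k (K k), |d (l+1) - d l| := by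
            gcongr; exact Finset.abs_sum_le_sum_abs _ _
        _ ≤ |r (K k)| + ∑ l ∈ Finset.Ico k (k + 2*m), |d (l+1) - d l| :=
            add_le_add le_rfl (Finset.sum_le_sum_of_subset_of_nonneg
              (Finset.Ico_subset_Ico le_rfl (hK2 k))
              (fun x _ _ => abs_nonneg (d (x+1) - d x)))
        _ = |r (K k)| + ∑ l ∈ Finset.range (2*m), |d (k+l+1) - d (k+l)| := by
            rw [Finset.sum_Ico_eq_sum_range]
            simp only [Nat.add_sub_cancel_left]
        _ ≤ |r (K k)| + ∑ l ∈ Finset.range (2*m),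
              Real.sqrt (sqa i₀) * Real.sqrt (∑ j, (xseq (k+l+1) j - xseq (k+l) j)^2) := by
            gcongr with l hl
            exact hterm (k+l)
        _ = _ := by rw [Finset.mul_sum]
    refine squeeze_zero_norm hbound ?_
    have hKtend : Tendsto K atTop atTop := tendsto_atTop_mono hK1 tendsto_id
    have h1 : Tendsto (fun k => |r (K k)|) atTop (nhds 0) := by
      have := (hr0.comp hKtend).abs
      simpa using this
    have h2 : Tendsto (fun k => ∑ l ∈ Finset.range (2*m),
        Real.sqrt (∑ j, (xseq (k+l+1) j - xseq (k+l) j)^2)) atTop (nhds 0) := by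
      have hall : ∀ l ∈ Finset.range (2*m), Tendsto (fun k =>
          Real.sqrt (∑ j, (xseq (k+l+1) j - xseq (k+l) j)^2)) atTop (nhds 0) := by
        intro l _
        have hcomp : Tendsto (fun k => k + l) atTop atTop := tendsto_add_atTop_nat l
        exact hsqrtS.comp hcomp
      have := tendsto_finset_sum (Finset.range (2*m)) hall
      simpa using this
    simpa using h1.add (h2.const_mul (Real.sqrt (sqa i₀)))
  -- boundedness of the iterates and of zseq
  obtain ⟨Rx, hRxdef⟩ : ∃ Rx : ℝ, Rx = 4 * D 0 + 2 * ∑ j, (xhat j)^2 := ⟨_, rfl⟩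
  have hRx0 : 0 ≤ Rx := by
    have := hD0 0
    rw [hRxdef]; positivity
  obtain ⟨Mu, hMudef⟩ : ∃ Mu : ℝ,
    Mu = lam * (Real.sqrt n * Real.sqrt Rx + Real.sqrt n)^p := ⟨_, rfl⟩
  have hMu0 : 0 ≤ Mu := by rw [hMudef]; positivity
  have hxb : ∀ k, ∑ j, (xseq k j)^2 ≤ Rx := by
    intro k
    have h1 := F2 k
    have hk0 : D k ≤ D 0 := hDanti (Nat.zero_le k)
    have h2 : ∑ j, (xseq k j - xhat j)^2 = ∑ j, (xhat j - xseq k j)^2 :=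
      Finset.sum_congr rfl fun j _ => by ring
    have h3 := kz_two_sq (xseq k) xhat
    rw [h2] at h3
    rw [hRxdef]
    linarith
  have hub : ∀ k, Real.sqrt (∑ j, (zseq k j - xseq k j)^2) ≤ Mu := by
    intro k
    rcases eq_or_ne (∑ j, (zseq k j - xseq k j)^2) 0 with h0 | hne
    · rw [h0, Real.sqrt_zero]; exact hMu0
    · have hpos : 0 < ∑ j, (zseq k j - xseq k j)^2 :=
        lt_of_le_of_ne (by positivity) (Ne.symm hne)
      set s : ℝ := Real.sqrt (∑ j, (zseq k j - xseq k j)^2) with hsdef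
      have hs : 0 < s := Real.sqrt_pos.mpr hpos
      have hss : s * s = ∑ j, (zseq k j - xseq k j)^2 := Real.mul_self_sqrt hpos.le
      have key := kz_prox_subgrad hlam prox hprox (zseq k)
        (fun j => xseq k j + (zseq k j - xseq k j) / s)
      rw [← hx k] at key
      have e1 : ∑ j, (zseq k j - xseq k j) * ((xseq k j + (zseq k j - xseq k j) / s)
          - xseq k j) = (∑ j, (zseq k j - xseq k j)^2) / s := by
        rw [Finset.sum_div]
        exact Finset.sum_congr rfl fun j _ => by field_simp; ring
      have e2 : (∑ j, (zseq k j - xseq k j)^2) / s = s := by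
        rw [← hss]; field_simp
      rw [e1, e2] at key
      have hxl1 : ∑ j, |xseq k j| ≤ Real.sqrt n * Real.sqrt Rx := by
        refine (kz_l1_le (xseq k)).trans ?_
        exact mul_le_mul_of_nonneg_left (Real.sqrt_le_sqrt (hxb k)) (Real.sqrt_nonneg _)
      have hul1 : ∑ j, |(zseq k j - xseq k j) / s| ≤ Real.sqrt n := by
        have h1 : ∑ j, |(zseq k j - xseq k j) / s| = (∑ j, |zseq k j - xseq k j|) / s := by
          rw [Finset.sum_div]
          exact Finset.sum_congr rfl fun j _ => by
            rw [abs_div, abs_of_pos hs]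
        rw [h1, div_le_iff₀ hs]
        calc ∑ j, |zseq k j - xseq k j|
            ≤ Real.sqrt n * Real.sqrt (∑ j, (zseq k j - xseq k j)^2) :=
              kz_l1_le (fun j => zseq k j - xseq k j)
          _ = Real.sqrt n * s := by rw [hsdef]
      have habs : ∑ j, |xseq k j + (zseq k j - xseq k j) / s|
          ≤ Real.sqrt n * Real.sqrt Rx + Real.sqrt n := by
        calc ∑ j, |xseq k j + (zseq k j - xseq k j) / s|
            ≤ ∑ j, (|xseq k j| + |(zseq k j - xseq k j) / s|) :=
              Finset.sum_le_sum fun j _ => abs_add_le _ _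
          _ = ∑ j, |xseq k j| + ∑ j, |(zseq k j - xseq k j) / s| :=
              Finset.sum_add_distrib
          _ ≤ _ := add_le_add hxl1 hul1
      have hpow : lam * (∑ j, |xseq k j + (zseq k j - xseq k j) / s|)^p ≤ Mu := by
        rw [hMudef]
        exact mul_le_mul_of_nonneg_left (pow_le_pow_left₀ (by positivity) habs p) hlam.le
      have hg0 : 0 ≤ lam * (∑ j, |xseq k j|)^p := by positivity
      linarith
  have hzb : ∀ k, Real.sqrt (∑ j, (zseq k j)^2) ≤ Mu + Real.sqrt Rx := by
    intro k
    have e : ∑ j, (zseq k j)^2 = ∑ j, ((zseq k j - xseq k j) + xseq k j)^2 :=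
      Finset.sum_congr rfl fun j _ => by ring
    rw [e]
    refine (kz_minkowski (fun j => zseq k j - xseq k j) (xseq k)).trans ?_
    exact add_le_add (hub k) (Real.sqrt_le_sqrt (hxb k))
  -- the row-space linear map and a bounded right inverse
  set T : (Fin m → ℝ) →ₗ[ℝ] (Fin n → ℝ) :=
    { toFun := fun y => fun j => ∑ i, y i * a i j
      map_add' := fun y₁ y₂ => funext fun j => by
        simp [add_mul, Finset.sum_add_distrib]
      map_smul' := fun cc y => funext fun j => by
        simp [Finset.mul_sum, mul_assoc] } with hTdef
  have hTapp : ∀ y j, T y j = ∑ i, y i * a i j := fun y j => rfl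
  have harow : ∀ i₁ : Fin m, a i₁ ∈ LinearMap.range T := by
    intro i₁
    refine ⟨Pi.single i₁ 1, funext fun j => ?_⟩
    rw [hTapp]
    simp [Pi.single_apply, ite_mul]
  have hrange : ∀ k, zseq k ∈ LinearMap.range T := by
    intro k
    induction k with
    | zero =>
      obtain ⟨y, hy⟩ := hz0
      exact ⟨y, hy.symm⟩
    | succ k ih =>
      rw [hz k]
      exact Submodule.add_mem _ ih (Submodule.smul_mem _ _ (harow (idx k)))
  have hzh_range : (fun j => ∑ i, y0 i * a i j) ∈ LinearMap.range T := ⟨y0, rfl⟩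
  have hsurj : LinearMap.range T.rangeRestrict = ⊤ := LinearMap.range_rangeRestrict T
  obtain ⟨Sinv, hSinv⟩ := T.rangeRestrict.exists_rightInverse_of_surjective hsurj
  have hScont : Continuous Sinv := Sinv.continuous_of_finiteDimensional
  set S' : ↥(LinearMap.range T) →L[ℝ] (Fin m → ℝ) := ⟨Sinv, hScont⟩ with hS'def
  have hSb : ∀ v : ↥(LinearMap.range T), ‖Sinv v‖ ≤ ‖S'‖ * ‖v‖ :=
    fun v => S'.le_opNorm v
  obtain ⟨C, hCdef⟩ : ∃ C : ℝ, C = ‖S'‖ := ⟨_, rfl⟩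
  rw [← hCdef] at hSb
  have hC0 : (0:ℝ) ≤ C := by
    rw [hCdef]; exact ContinuousLinearMap.opNorm_nonneg _
  have hTS : ∀ v : ↥(LinearMap.range T), T (Sinv v) = (v : Fin n → ℝ) := by
    intro v
    have h := LinearMap.ext_iff.mp hSinv v
    have h2 := congrArg (Subtype.val) h
    simpa using h2
  -- upper bound for D via residuals
  obtain ⟨Czh, hCzhdef⟩ : ∃ Czh : ℝ,
    Czh = Real.sqrt (∑ j, (∑ i, y0 i * a i j) ^ 2) := ⟨_, rfl⟩
  obtain ⟨W, hWdef⟩ : ∃ W : ℝ, W = C * (Czh + (Mu + Real.sqrt Rx)) := ⟨_, rfl⟩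
  have hDub : ∀ k, D k ≤ W * ∑ i, |b i - ∑ j, a i j * xseq k j| := by
    intro k
    set v : ↥(LinearMap.range T) :=
      ⟨fun j => (∑ i, y0 i * a i j) - zseq k j,
        Submodule.sub_mem _ hzh_range (hrange k)⟩ with hvdef
    set w : Fin m → ℝ := Sinv v with hwdef
    have hTw : ∀ j, (∑ i, w i * a i j) = (∑ i, y0 i * a i j) - zseq k j := by
      intro j
      have h := congrFun (hTS v) j
      rw [hTapp] at h
      exact h
    -- step 1 : D k ≤ ⟨ẑ − zᵏ, x̂ − xᵏ⟩
    have step1 : D k ≤ ∑ j, ((∑ i, y0 i * a i j) - zseq k j) * (xhat j - xseq k j) := by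
      have h := hy0 (xseq k)
      have hsub : ∑ j, ((∑ i, y0 i * a i j) - zseq k j) * (xhat j - xseq k j)
          = ∑ j, (∑ i, y0 i * a i j) * (xhat j - xseq k j)
            - ∑ j, zseq k j * (xhat j - xseq k j) :=
        kz_sum_mul_sub _ _ _
      have hneg : ∑ j, (∑ i, y0 i * a i j) * (xseq k j - xhat j)
          = - ∑ j, (∑ i, y0 i * a i j) * (xhat j - xseq k j) := by
        rw [← Finset.sum_neg_distrib]
        exact Finset.sum_congr rfl fun j _ => by ring
      rw [hneg] at h
      simp only [hDdef]
      linarith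
    -- step 2 : rewrite as a combination of residuals
    have step2 : ∑ j, ((∑ i, y0 i * a i j) - zseq k j) * (xhat j - xseq k j)
        = ∑ i, w i * (b i - ∑ j, a i j * xseq k j) := by
      calc ∑ j, ((∑ i, y0 i * a i j) - zseq k j) * (xhat j - xseq k j)
          = ∑ j, (∑ i, w i * a i j) * (xhat j - xseq k j) := by
            exact Finset.sum_congr rfl fun j _ => by rw [hTw j]
        _ = ∑ j, ∑ i, w i * (a i j * (xhat j - xseq k j)) := by
            refine Finset.sum_congr rfl fun j _ => ?_
            rw [Finset.sum_mul]
            exact Finset.sum_congr rfl fun i _ => by ring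
        _ = ∑ i, ∑ j, w i * (a i j * (xhat j - xseq k j)) := Finset.sum_comm
        _ = ∑ i, w i * ∑ j, a i j * (xhat j - xseq k j) := by
            exact Finset.sum_congr rfl fun i _ => (Finset.mul_sum _ _ _).symm
        _ = ∑ i, w i * (b i - ∑ j, a i j * xseq k j) := by
            refine Finset.sum_congr rfl fun i _ => ?_
            congr 1
            have hsub2 : ∑ j, a i j * (xhat j - xseq k j)
                = ∑ j, a i j * xhat j - ∑ j, a i j * xseq k j := by
              rw [← Finset.sum_sub_distrib]
              exact Finset.sum_congr rfl fun j _ => by ring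
            rw [hsub2, hxhat i]
    -- step 3 : bound coefficients
    have hwb : ∀ i, |w i| ≤ W := by
      intro i
      have h1 : |w i| ≤ ‖w‖ := norm_le_pi_norm w i
      have h2 : ‖w‖ ≤ C * ‖v‖ := hSb v
      have h3 : ‖(v : Fin n → ℝ)‖ ≤ Czh + (Mu + Real.sqrt Rx) := by
        have hpi : ∀ j, |(v : Fin n → ℝ) j| ≤
            Real.sqrt (∑ j', ((∑ i, y0 i * a i j') - zseq k j')^2) := by
          intro j
          have hsingle : ((∑ i, y0 i * a i j) - zseq k j)^2 ≤
              ∑ j', ((∑ i, y0 i * a i j') - zseq k j')^2 :=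
            Finset.single_le_sum (f := fun j' => ((∑ i, y0 i * a i j') - zseq k j')^2)
              (fun j' _ => sq_nonneg _) (Finset.mem_univ j)
          calc |(v : Fin n → ℝ) j| = Real.sqrt (((∑ i, y0 i * a i j) - zseq k j)^2) := by
                rw [Real.sqrt_sq_eq_abs]
            _ ≤ _ := Real.sqrt_le_sqrt hsingle
        have hme : Real.sqrt (∑ j', ((∑ i, y0 i * a i j') - zseq k j')^2)
            ≤ Czh + (Mu + Real.sqrt Rx) := by
          have e : ∑ j', ((∑ i, y0 i * a i j') - zseq k j')^2
              = ∑ j', ((∑ i, y0 i * a i j') + (- zseq k j'))^2 :=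
            Finset.sum_congr rfl fun j' _ => by ring
          rw [e]
          refine (kz_minkowski (fun j' => ∑ i, y0 i * a i j')
            (fun j' => - zseq k j')).trans ?_
          have e2 : ∑ j', (- zseq k j')^2 = ∑ j', (zseq k j')^2 :=
            Finset.sum_congr rfl fun j' _ => by ring
          rw [e2, hCzhdef]
          exact add_le_add le_rfl (hzb k)
        have := pi_norm_le_iff_of_nonneg (x := (v : Fin n → ℝ))
          (by positivity : (0:ℝ) ≤ Real.sqrt (∑ j', ((∑ i, y0 i * a i j') - zseq k j')^2))
        exact (this.mpr (fun j => hpi j)).trans hme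
      calc |w i| ≤ C * ‖v‖ := h1.trans h2
        _ ≤ C * (Czh + (Mu + Real.sqrt Rx)) := mul_le_mul_of_nonneg_left h3 hC0
        _ = W := by rw [hWdef]
    have hW0 : 0 ≤ W := le_trans (abs_nonneg (w ⟨0, hm⟩)) (hwb ⟨0, hm⟩)
    have step3 : ∑ i, w i * (b i - ∑ j, a i j * xseq k j)
        ≤ W * ∑ i, |b i - ∑ j, a i j * xseq k j| := by
      rw [Finset.mul_sum]
      refine Finset.sum_le_sum fun i _ => ?_
      calc w i * (b i - ∑ j, a i j * xseq k j)
          ≤ |w i * (b i - ∑ j, a i j * xseq k j)| := le_abs_self _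
        _ = |w i| * |b i - ∑ j, a i j * xseq k j| := abs_mul _ _
        _ ≤ W * |b i - ∑ j, a i j * xseq k j| :=
            mul_le_mul_of_nonneg_right (hwb i) (abs_nonneg _)
    calc D k ≤ ∑ j, ((∑ i, y0 i * a i j) - zseq k j) * (xhat j - xseq k j) := step1
      _ = ∑ i, w i * (b i - ∑ j, a i j * xseq k j) := step2
      _ ≤ _ := step3
  -- conclude D → 0
  have hres : Tendsto (fun k => ∑ i, |b i - ∑ j, a i j * xseq k j|) atTop (nhds 0) := by
    have hall : ∀ i ∈ Finset.univ (α := Fin m), Tendsto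
        (fun k => |b i - ∑ j, a i j * xseq k j|) atTop (nhds 0) := by
      intro i _
      have := (hρ i).abs
      simpa using this
    have := tendsto_finset_sum Finset.univ hall
    simpa using this
  have hDto0 : Tendsto D atTop (nhds 0) :=
    squeeze_zero hD0 hDub (by simpa using hres.const_mul W)
  -- conclude convergence of xseq
  have hsq : Tendsto (fun k => ∑ j, (xhat j - xseq k j)^2) atTop (nhds 0) := by
    refine squeeze_zero (fun k => by positivity) (fun k => ?_)
      (by simpa using hDto0.const_mul 2)
    have := F2 k
    linarith
  rw [tendsto_pi_nhds]
  intro j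
  have hjb : ∀ k, ‖xseq k j - xhat j‖ ≤ Real.sqrt (∑ j', (xhat j' - xseq k j')^2) := by
    intro k
    have hsingle : (xhat j - xseq k j)^2 ≤ ∑ j', (xhat j' - xseq k j')^2 :=
      Finset.single_le_sum (f := fun j' => (xhat j' - xseq k j')^2)
        (fun j' _ => sq_nonneg _) (Finset.mem_univ j)
    calc ‖xseq k j - xhat j‖ = Real.sqrt ((xseq k j - xhat j)^2) :=
          (Real.sqrt_sq_eq_abs _).symm
      _ = Real.sqrt ((xhat j - xseq k j)^2) := by rw [show (xseq k j - xhat j)^2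
          = (xhat j - xseq k j)^2 from by ring]
      _ ≤ _ := Real.sqrt_le_sqrt hsingle
  have h0 : Tendsto (fun k => xseq k j - xhat j) atTop (nhds 0) :=
    squeeze_zero_norm hjb (by simpa using hsq.sqrt)
  have := h0.add (tendsto_const_nhds (x := xhat j))
  simpa using this
end

section
/- Let m, n be positive integers, A ∈ ℝ^{m×n} with rows a₁,…,a_m all nonzero, b ∈ ℝ^m, p a positive integer, λ > 0, 0 < t < 2, and ν > 0. Define f(x) = λ‖x‖₁^p + (1/2)‖x‖² and let prox(z) be the unique minimizer of x ↦ (1/2)‖x − z‖² + λ‖x‖₁^p. Let x̂ satisfy A x̂ = b. Suppose z ∈ ℝ^n and x = prox(z) satisfy the bound D_{f,z}(x, x̂) ≤ (1/ν)·‖A(x − x̂)‖². For each i ∈ {1,…,m}, set zᵢ' = z + (t/‖a_i‖²)·(b_i − ⟨a_i, x⟩)·a_i and xᵢ' = prox(zᵢ'). Then the expected Bregman distance after one randomized Kaczmarz step, where index i is chosen with probability ‖a_i‖²/‖A‖_F², satisfies Σ_{i=1}^m (‖a_i‖²/‖A‖_F²)·D_{f,zᵢ'}(xᵢ', x̂)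 ≤ (1 − (ν t/‖A‖_F²)·(1 − t/2))·D_{f,z}(x, x̂). -/
/-- One-step expected Bregman distance contraction for the randomized
regularized Kaczmarz algorithm, with row i chosen with probability
‖aᵢ‖²/‖A‖_F², under the restricted-strong-convexity bound with constant ν. -/
theorem kaczmarz_expected_bregman_contraction (m n : ℕ) (hm : 0 < m) (hn : 0 < n)
    (a : Fin m → Fin n → ℝ) (ha : ∀ i, a i ≠ 0) (b : Fin m → ℝ)
    (p : ℕ) (hp : 0 < p) (lam : ℝ) (hlam : 0 < lam)
    (t : ℝ) (ht0 : 0 < t) (ht2 : t < 2) (ν : ℝ) (hν : 0 < ν)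
    (f : (Fin n → ℝ) → ℝ)
    (hf : ∀ x, f x = lam * (∑ j, |x j|)^p + (1/2) * ∑ j, (x j)^2)
    (D : (Fin n → ℝ) → (Fin n → ℝ) → (Fin n → ℝ) → ℝ)
    (hD : ∀ u v w, D u v w = f w - f v - ∑ j, u j * (w j - v j))
    (prox : (Fin n → ℝ) → (Fin n → ℝ))
    (hprox : ∀ z x : Fin n → ℝ,
      (1/2) * ∑ j, (prox z j - z j)^2 + lam * (∑ j, |prox z j|)^p ≤
      (1/2) * ∑ j, (x j - z j)^2 + lam * (∑ j, |x j|)^p)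
    (xhat : Fin n → ℝ) (hxhat : ∀ i, ∑ j, a i j * xhat j = b i)
    (z x : Fin n → ℝ) (hx : x = prox z)
    (hbound : D z x xhat ≤ (1/ν) * ∑ i, (∑ j, a i j * (x j - xhat j))^2)
    (z' x' : Fin m → Fin n → ℝ)
    (hz' : ∀ i, z' i = z + ((t / ∑ j, (a i j)^2) * (b i - ∑ j, a i j * x j)) • a i)
    (hx' : ∀ i, x' i = prox (z' i)) :
    ∑ i, ((∑ j, (a i j)^2) / (∑ i', ∑ j, (a i' j)^2)) * D (z' i) (x' i) xhat ≤
      (1 - ν * t / (∑ i', ∑ j, (a i' j)^2) * (1 - t/2)) * D z x xhat := by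
  set F : ℝ := ∑ i', ∑ j, (a i' j)^2 with hFdef
  -- positivity of row norms
  have hrow : ∀ i, 0 < ∑ j, (a i j)^2 := by
    intro i
    have hj : ∃ j, a i j ≠ 0 := by
      by_contra h; push_neg at h; exact ha i (funext h)
    obtain ⟨j, hj⟩ := hj
    exact Finset.sum_pos' (fun k _ => sq_nonneg _)
      ⟨j, Finset.mem_univ j, by positivity⟩
  have : Nonempty (Fin m) := ⟨⟨0, hm⟩⟩
  have hFpos : 0 < F := Finset.sum_pos (fun i _ => hrow i) Finset.univ_nonempty
  -- residual identity
  have hr : ∀ i, ∑ j, a i j * (xhat j - x j) = b i - ∑ j, a i j * x j := by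
    intro i
    have e : ∑ j, a i j * (xhat j - x j)
        = (∑ j, a i j * xhat j) - ∑ j, a i j * x j := by
      rw [← Finset.sum_sub_distrib]
      exact Finset.sum_congr rfl fun j _ => by ring
    rw [e, hxhat i]
  -- subgradient inequality for the ℓ1-power part at x = prox z
  have subA : ∀ w : Fin n → ℝ,
      lam * (∑ j, |x j|)^p + ∑ j, (z j - x j) * (w j - x j)
        ≤ lam * (∑ j, |w j|)^p := by
    intro w
    have hAnn : (0:ℝ) ≤ ∑ j, |x j| := Finset.sum_nonneg fun j _ => abs_nonneg _
    have hBnn : (0:ℝ) ≤ ∑ j, |w j| := Finset.sum_nonneg fun j _ => abs_nonneg _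
    have hQnn : (0:ℝ) ≤ ∑ j, (w j - x j)^2 :=
      Finset.sum_nonneg fun j _ => sq_nonneg _
    -- the key inequality for every step size s ∈ (0,1]
    have hkey : ∀ s : ℝ, 0 < s → s ≤ 1 →
        lam * (∑ j, |x j|)^p + ∑ j, (z j - x j) * (w j - x j)
          ≤ lam * (∑ j, |w j|)^p + (s/2) * ∑ j, (w j - x j)^2 := by
      intro s hs0 hs1
      have h := hprox z (fun j => x j + s * (w j - x j))
      rw [← hx] at h
      try simp only at h
      -- expand the quadratic term
      have hq : ∑ j, (x j + s * (w j - x j) - z j)^2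
          = (∑ j, (x j - z j)^2)
            - s * (2 * (∑ j, (z j - x j) * (w j - x j)))
            + s^2 * (∑ j, (w j - x j)^2) := by
        rw [Finset.mul_sum, Finset.mul_sum, Finset.mul_sum,
          ← Finset.sum_sub_distrib, ← Finset.sum_add_distrib]
        exact Finset.sum_congr rfl fun j _ => by ring
      rw [hq] at h
      -- convexity of the ℓ1-power part
      have c1 : ∑ j, |x j + s * (w j - x j)|
          ≤ (1-s) * (∑ j, |x j|) + s * (∑ j, |w j|) := by
        have hterm : ∀ j ∈ Finset.univ,
            |x j + s * (w j - x j)| ≤ (1-s) * |x j| + s * |w j| := by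
          intro j _
          have e : x j + s * (w j - x j) = (1-s) * x j + s * w j := by ring
          rw [e]
          calc |(1-s) * x j + s * w j| ≤ |(1-s) * x j| + |s * w j| := abs_add_le _ _
            _ = (1-s) * |x j| + s * |w j| := by
                rw [abs_mul, abs_mul, abs_of_nonneg (by linarith : (0:ℝ) ≤ 1 - s),
                  abs_of_nonneg hs0.le]
        calc ∑ j, |x j + s * (w j - x j)|
            ≤ ∑ j, ((1-s) * |x j| + s * |w j|) := Finset.sum_le_sum hterm
          _ = (1-s) * (∑ j, |x j|) + s * (∑ j, |w j|) := by
              rw [Finset.mul_sum, Finset.mul_sum, ← Finset.sum_add_distrib]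
      have c2 : (∑ j, |x j + s * (w j - x j)|)^p
          ≤ ((1-s) * (∑ j, |x j|) + s * (∑ j, |w j|))^p :=
        pow_le_pow_left₀ (Finset.sum_nonneg fun j _ => abs_nonneg _) c1 p
      have c3 := (convexOn_pow p).2 (Set.mem_Ici.mpr hAnn) (Set.mem_Ici.mpr hBnn)
        (by linarith : (0:ℝ) ≤ 1 - s) hs0.le (by ring)
      simp only [smul_eq_mul] at c3
      have hconv : lam * (∑ j, |x j + s * (w j - x j)|)^p
          ≤ (1-s) * (lam * (∑ j, |x j|)^p) + s * (lam * (∑ j, |w j|)^p) := by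
        have h5 := le_trans c2 c3
        calc lam * (∑ j, |x j + s * (w j - x j)|)^p
            ≤ lam * ((1-s) * (∑ j, |x j|)^p + s * (∑ j, |w j|)^p) :=
              mul_le_mul_of_nonneg_left h5 hlam.le
          _ = (1-s) * (lam * (∑ j, |x j|)^p) + s * (lam * (∑ j, |w j|)^p) := by ring
      -- combine and divide by s
      have hcomb : s * 0 ≤ s * (lam * (∑ j, |w j|)^p
          + (s/2) * ∑ j, (w j - x j)^2
          - lam * (∑ j, |x j|)^p - ∑ j, (z j - x j) * (w j - x j)) := by
        nlinarith [h, hconv]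
      have hE := le_of_mul_le_mul_left hcomb hs0
      linarith
    -- take the limit s → 0⁺ by contradiction
    by_contra hcon
    push_neg at hcon
    set ε : ℝ := lam * (∑ j, |x j|)^p + (∑ j, (z j - x j) * (w j - x j))
      - lam * (∑ j, |w j|)^p with hεdef
    have hε : 0 < ε := by simp only [hεdef]; linarith
    set Q : ℝ := ∑ j, (w j - x j)^2 with hQdef
    have hden : (0:ℝ) < Q + 1 := by linarith
    set s : ℝ := min 1 (ε / (Q + 1)) with hsdef
    have hs0 : 0 < s := lt_min one_pos (div_pos hε hden)
    have hs1 : s ≤ 1 := min_le_left _ _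
    have hkey' := hkey s hs0 hs1
    have hsε : s * (Q + 1) ≤ ε := by
      have h1 : s ≤ ε / (Q + 1) := min_le_right _ _
      calc s * (Q + 1) ≤ (ε / (Q + 1)) * (Q + 1) :=
            mul_le_mul_of_nonneg_right h1 hden.le
        _ = ε := div_mul_cancel₀ ε hden.ne'
    nlinarith [hkey', hsε, hs0, hQnn]
  -- subgradient inequality for f at x (with the strong convexity quadratic)
  have subF : ∀ w : Fin n → ℝ,
      f x + (∑ j, z j * (w j - x j)) + (1/2) * ∑ j, (w j - x j)^2 ≤ f w := by
    intro w
    have h1 := subA w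
    have I1 : ∑ j, (z j - x j) * (w j - x j)
        = ∑ j, z j * (w j - x j) - ∑ j, x j * (w j - x j) := by
      rw [← Finset.sum_sub_distrib]
      exact Finset.sum_congr rfl fun j _ => by ring
    have I2 : ∑ j, (w j - x j)^2
        = ∑ j, (w j)^2 - ∑ j, (x j)^2 - 2 * (∑ j, x j * (w j - x j)) := by
      rw [Finset.mul_sum, ← Finset.sum_sub_distrib, ← Finset.sum_sub_distrib]
      exact Finset.sum_congr rfl fun j _ => by ring
    rw [hf x, hf w]
    linarith
  -- per-row one-step bound
  have step : ∀ i, D (z' i) (x' i) xhat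
      ≤ D z x xhat
        - t * (1 - t/2) / (∑ j, (a i j)^2) * (b i - ∑ j, a i j * x j)^2 := by
    intro i
    set c : ℝ := (t / ∑ j, (a i j)^2) * (b i - ∑ j, a i j * x j) with hc
    have hzj : ∀ jj, z' i jj = z jj + c * a i jj := by
      intro jj
      rw [hz' i, ← hc]
      simp only [Pi.add_apply, Pi.smul_apply, smul_eq_mul]
    have E2 : ∑ j, z' i j * (xhat j - x' i j)
        = (∑ j, z j * (xhat j - x' i j))
          + c * ∑ j, a i j * (xhat j - x' i j) := by
      rw [Finset.mul_sum, ← Finset.sum_add_distrib]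
      refine Finset.sum_congr rfl fun j _ => ?_
      rw [hzj j]; ring
    have E3 : ∑ j, z j * (xhat j - x' i j)
        = (∑ j, z j * (xhat j - x j)) - ∑ j, z j * (x' i j - x j) := by
      rw [← Finset.sum_sub_distrib]
      exact Finset.sum_congr rfl fun j _ => by ring
    have E4 : ∑ j, a i j * (xhat j - x' i j)
        = (b i - ∑ j, a i j * x j) - ∑ j, a i j * (x' i j - x j) := by
      have e : ∑ j, a i j * (xhat j - x' i j)
          = (∑ j, a i j * (xhat j - x j)) - ∑ j, a i j * (x' i j - x j) := by
        rw [← Finset.sum_sub_distrib]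
        exact Finset.sum_congr rfl fun j _ => by ring
      rw [e, hr i]
    have E4c : c * ∑ j, a i j * (xhat j - x' i j)
        = c * (b i - ∑ j, a i j * x j) - c * ∑ j, a i j * (x' i j - x j) := by
      rw [E4]; ring
    have E5 : c * ∑ j, a i j * (x' i j - x j)
        ≤ (1/2) * (c^2 * (∑ j, (a i j)^2))
          + (1/2) * ∑ j, (x' i j - x j)^2 := by
      have h0 : (0:ℝ) ≤ ∑ j, (c * a i j - (x' i j - x j))^2 :=
        Finset.sum_nonneg fun j _ => sq_nonneg _
      have e : ∑ j, (c * a i j - (x' i j - x j))^2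
          = c^2 * (∑ j, (a i j)^2)
            - 2 * (c * ∑ j, a i j * (x' i j - x j))
            + ∑ j, (x' i j - x j)^2 := by
        rw [Finset.mul_sum, Finset.mul_sum, Finset.mul_sum,
          ← Finset.sum_sub_distrib, ← Finset.sum_add_distrib]
        exact Finset.sum_congr rfl fun j _ => by ring
      linarith [h0, e.symm.le, e.le]
    have E9 : c * (b i - ∑ j, a i j * x j) - (1/2) * (c^2 * (∑ j, (a i j)^2))
        = t * (1 - t/2) / (∑ j, (a i j)^2) * (b i - ∑ j, a i j * x j)^2 := by
      rw [hc]
      have hs := (hrow i).ne'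
      field_simp
    have H1 := subF (x' i)
    rw [hD, hD]
    linarith [E2, E3, E4c, E5, E9, H1]
  -- the bound hypothesis in terms of residuals
  have hSr : ν * D z x xhat ≤ ∑ i, (b i - ∑ j, a i j * x j)^2 := by
    have e2 : ∑ i, (∑ j, a i j * (x j - xhat j))^2
        = ∑ i, (b i - ∑ j, a i j * x j)^2 := by
      refine Finset.sum_congr rfl fun i _ => ?_
      have e5 : (∑ j, a i j * (x j - xhat j))
          + (∑ j, a i j * (xhat j - x j)) = 0 := by
        rw [← Finset.sum_add_distrib]
        exact Finset.sum_eq_zero fun j _ => by ring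
      have e4 : ∑ j, a i j * (x j - xhat j) = -(b i - ∑ j, a i j * x j) := by
        have h2 := hr i
        linarith
      rw [e4]; ring
    have h := mul_le_mul_of_nonneg_left hbound hν.le
    have e : ν * ((1/ν) * ∑ i, (∑ j, a i j * (x j - xhat j))^2)
        = ∑ i, (∑ j, a i j * (x j - xhat j))^2 := by
      field_simp
    rw [e, e2] at h
    exact h
  -- assemble
  have hwnn : ∀ i, (0:ℝ) ≤ (∑ j, (a i j)^2) / F :=
    fun i => div_nonneg (hrow i).le hFpos.le
  have main : ∑ i, ((∑ j, (a i j)^2) / F) * D (z' i) (x' i) xhat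
      ≤ D z x xhat - (t * (1 - t/2) / F) * ∑ i, (b i - ∑ j, a i j * x j)^2 := by
    calc ∑ i, ((∑ j, (a i j)^2) / F) * D (z' i) (x' i) xhat
        ≤ ∑ i, ((∑ j, (a i j)^2) / F)
            * (D z x xhat
              - t * (1 - t/2) / (∑ j, (a i j)^2) * (b i - ∑ j, a i j * x j)^2) :=
          Finset.sum_le_sum fun i _ =>
            mul_le_mul_of_nonneg_left (step i) (hwnn i)
      _ = ∑ i, (((∑ j, (a i j)^2) / F) * D z x xhat
            - (t * (1 - t/2) / F) * (b i - ∑ j, a i j * x j)^2) := by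
          refine Finset.sum_congr rfl fun i _ => ?_
          have hs := (hrow i).ne'
          have e : (∑ j, (a i j)^2) / F * (t * (1 - t/2) / (∑ j, (a i j)^2))
              = t * (1 - t/2) / F := by
            rw [div_mul_div_comm, mul_comm F, mul_div_mul_left _ _ hs]
          rw [mul_sub, ← mul_assoc, e]
      _ = (∑ i, ((∑ j, (a i j)^2) / F)) * D z x xhat
          - (t * (1 - t/2) / F) * ∑ i, (b i - ∑ j, a i j * x j)^2 := by
          rw [Finset.sum_sub_distrib, ← Finset.sum_mul, Finset.mul_sum]
      _ = D z x xhat - (t * (1 - t/2) / F) * ∑ i, (b i - ∑ j, a i j * x j)^2 := by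
          rw [← Finset.sum_div, div_self hFpos.ne', one_mul]
  have hq : 0 < t * (1 - t/2) / F :=
    div_pos (mul_pos ht0 (by linarith)) hFpos
  have hstep2 : D z x xhat - (t * (1 - t/2) / F) * ∑ i, (b i - ∑ j, a i j * x j)^2
      ≤ D z x xhat - (t * (1 - t/2) / F) * (ν * D z x xhat) := by
    have := mul_le_mul_of_nonneg_left hSr hq.le
    linarith
  have hfin : D z x xhat - (t * (1 - t/2) / F) * (ν * D z x xhat)
      = (1 - ν * t / F * (1 - t/2)) * D z x xhat := by
    ring
  linarith [main, hstep2, hfin.le, hfin.ge]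
end
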